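/- arXiv:math/0510135 — 8 statements merged into one kernel-verified Lean document; each statement's English description precedes it below -/
import Mathlib

section
/- Let V₁ : N₁ → H, V₂ : N₂ → H, V₃ : N₃ → H be isometries, set A₂₁ = V₂*V₁, A₃₂ = V₃*V₂, A₃₁ = V₃*V₁, and E_k = Ran V_k. Then the following are equivalent: (1) A₃₁ = A₃₂A₂₁; (2) V₃*V₁ − V₃*V₂V₂*V₁ = 0; (3) (E₁ ⊔ E₂) ⊖ E₂ is orthogonal to (E₃ ⊔ E₂) ⊖ E₂. -/
open ContinuousLinearMap
open scoped InnerProductSpace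

lemma closure_inner_zero {H : Type*} [NormedAddCommGroup H] [InnerProductSpace ℂ H]
    (u : H) (S : Submodule ℂ H) (h : ∀ w ∈ S, ⟪u, w⟫_ℂ = 0) :
    ∀ w ∈ S.topologicalClosure, ⟪u, w⟫_ℂ = 0 := by
  have hle : S.topologicalClosure ≤ LinearMap.ker (innerSL ℂ u : H →ₗ[ℂ] ℂ) :=
    Submodule.topologicalClosure_minimal (t := LinearMap.ker (innerSL ℂ u : H →ₗ[ℂ] ℂ)) S (fun w hw => by change (innerSL ℂ u) w = 0; exact h w hw)
      (ContinuousLinearMap.isClosed_ker (innerSL ℂ u))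
  intro w hw
  simpa using hle hw

/-- For isometries `V₁, V₂, V₃` with `A₂₁ = V₂*V₁`, `A₃₂ = V₃*V₂`,
`A₃₁ = V₃*V₁`, `E_k = Ran V_k`, the following are equivalent:
(1) `A₃₁ = A₃₂ A₂₁`; (2) `V₃*V₁ − V₃*V₂V₂*V₁ = 0`;
(3) `(E₁ ⊔ E₂) ⊖ E₂ ⊥ (E₃ ⊔ E₂) ⊖ E₂`. -/
theorem factorization_orthogonality_tfae
    {N₁ N₂ N₃ H : Type*}
    [NormedAddCommGroup N₁] [InnerProductSpace ℂ N₁] [CompleteSpace N₁]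
    [NormedAddCommGroup N₂] [InnerProductSpace ℂ N₂] [CompleteSpace N₂]
    [NormedAddCommGroup N₃] [InnerProductSpace ℂ N₃] [CompleteSpace N₃]
    [NormedAddCommGroup H] [InnerProductSpace ℂ H] [CompleteSpace H]
    (V₁ : N₁ →L[ℂ] H) (V₂ : N₂ →L[ℂ] H) (V₃ : N₃ →L[ℂ] H)
    (hV₁ : ∀ x, ‖V₁ x‖ = ‖x‖) (hV₂ : ∀ x, ‖V₂ x‖ = ‖x‖) (hV₃ : ∀ x, ‖V₃ x‖ = ‖x‖) :
    ((adjoint V₃ ∘L V₁ = (adjoint V₃ ∘L V₂) ∘L (adjoint V₂ ∘L V₁)) ↔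
        (adjoint V₃ ∘L V₁ - (adjoint V₃ ∘L V₂) ∘L (adjoint V₂ ∘L V₁) = 0))
      ∧ ((adjoint V₃ ∘L V₁ - (adjoint V₃ ∘L V₂) ∘L (adjoint V₂ ∘L V₁) = 0) ↔
        ((LinearMap.range (V₁ : N₁ →ₗ[ℂ] H) ⊔ LinearMap.range (V₂ : N₂ →ₗ[ℂ] H)).topologicalClosure
            ⊓ (LinearMap.range (V₂ : N₂ →ₗ[ℂ] H))ᗮ ≤
          ((LinearMap.range (V₃ : N₃ →ₗ[ℂ] H) ⊔ LinearMap.range (V₂ : N₂ →ₗ[ℂ] H)).topologicalClosure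
            ⊓ (LinearMap.range (V₂ : N₂ →ₗ[ℂ] H))ᗮ)ᗮ)) := by
  -- the isometry `V₂` as a `LinearIsometry`
  have hinner₂ : ∀ (a b : N₂), ⟪V₂ a, V₂ b⟫_ℂ = ⟪a, b⟫_ℂ := by
    intro a b
    exact (LinearIsometry.inner_map_map ⟨(V₂ : N₂ →ₗ[ℂ] H), hV₂⟩ a b)
  -- `Q w = w - P₂ w` where `P₂ = V₂ V₂*`
  set Q : H → H := fun w => w - V₂ (adjoint V₂ w) with hQdef
  have hQ_orth : ∀ (z : N₂) (w : H), ⟪V₂ z, Q w⟫_ℂ = 0 := by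
    intro z w
    simp only [hQdef, inner_sub_right, adjoint_inner_right, hinner₂]
    ring_nf
  have hQ_orth' : ∀ (w : H) (z : N₂), ⟪Q w, V₂ z⟫_ℂ = 0 := by
    intro w z
    rw [← inner_conj_symm, hQ_orth]
    simp
  -- the central scalar identity
  have hcentral : ∀ (x : N₁) (y : N₃),
      ⟪V₃ y, Q (V₁ x)⟫_ℂ
        = ⟪y, (adjoint V₃ ∘L V₁ - (adjoint V₃ ∘L V₂) ∘L (adjoint V₂ ∘L V₁)) x⟫_ℂ := by
    intro x y
    simp [hQdef, inner_sub_right, adjoint_inner_right]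
  refine ⟨sub_eq_zero.symm, ?_⟩
  constructor
  · -- (2) → (3)
    intro h u hu
    obtain ⟨hu₁, hu₂⟩ := hu
    -- step A : `⟪V₃ y, u⟫ = 0` for every `y`
    have stepA : ∀ y : N₃, ⟪V₃ y, u⟫_ℂ = 0 := by
      intro y
      have hdecomp : (V₃ y : H) = Q (V₃ y) + V₂ (adjoint V₂ (V₃ y)) := by
        simp [hQdef]
      have h1 : ⟪Q (V₃ y), u⟫_ℂ = 0 := by
        refine closure_inner_zero (Q (V₃ y)) _ ?_ u hu₁
        intro w hw
        rw [Submodule.mem_sup] at hw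
        obtain ⟨a, ⟨x, rfl⟩, b, ⟨z, rfl⟩, rfl⟩ := hw
        rw [inner_add_right, ContinuousLinearMap.coe_coe, ContinuousLinearMap.coe_coe, hQ_orth']
        have key : ⟪V₁ x, V₂ (adjoint V₂ (V₃ y))⟫_ℂ = ⟪V₂ (adjoint V₂ (V₁ x)), V₃ y⟫_ℂ := by
          rw [← adjoint_inner_left, adjoint_inner_right]
        have : ⟪V₁ x, Q (V₃ y)⟫_ℂ = ⟪Q (V₁ x), V₃ y⟫_ℂ := by
          simp only [hQdef, inner_sub_right, inner_sub_left, key]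
        have hz : ⟪V₃ y, Q (V₁ x)⟫_ℂ = 0 := by rw [hcentral, h]; simp
        have hz' : ⟪Q (V₁ x), V₃ y⟫_ℂ = 0 := by rw [← inner_conj_symm, hz]; simp
        rw [← inner_conj_symm, this, hz']
        simp
      have h2 : ⟪V₂ (adjoint V₂ (V₃ y)), u⟫_ℂ = 0 :=
        hu₂ _ ⟨_, rfl⟩
      rw [hdecomp, inner_add_left, h1, h2, add_zero]
    -- step B : conclude `u ∈ M₃ᗮ`
    intro v hv
    obtain ⟨hv₁, hv₂⟩ := hv
    have : ⟪u, v⟫_ℂ = 0 := by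
      refine closure_inner_zero u _ ?_ v hv₁
      intro w hw
      rw [Submodule.mem_sup] at hw
      obtain ⟨a, ⟨y, rfl⟩, b, ⟨z, rfl⟩, rfl⟩ := hw
      have ha : ⟪u, V₃ y⟫_ℂ = 0 := by rw [← inner_conj_symm, stepA]; simp
      have hb : ⟪u, V₂ z⟫_ℂ = 0 := by
        rw [← inner_conj_symm, show ⟪V₂ z, u⟫_ℂ = 0 from hu₂ _ ⟨z, rfl⟩]; simp
      rw [inner_add_right, ContinuousLinearMap.coe_coe, ContinuousLinearMap.coe_coe, ha, hb, add_zero]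
    rw [← inner_conj_symm, this]
    simp
  · -- (3) → (2)
    intro h3
    ext x
    refine ext_inner_left ℂ fun y => ?_
    simp only [ContinuousLinearMap.zero_apply, inner_zero_right]
    rw [← hcentral]
    have hmem₁ : Q (V₁ x) ∈
        (LinearMap.range (V₁ : N₁ →ₗ[ℂ] H) ⊔ LinearMap.range (V₂ : N₂ →ₗ[ℂ] H)).topologicalClosure
          ⊓ (LinearMap.range (V₂ : N₂ →ₗ[ℂ] H))ᗮ := by
      constructor
      · refine Submodule.le_topologicalClosure _ ?_
        exact sub_mem (Submodule.mem_sup_left ⟨x, rfl⟩)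
          (Submodule.mem_sup_right ⟨adjoint V₂ (V₁ x), rfl⟩)
      · rintro _ ⟨z, rfl⟩
        exact hQ_orth z (V₁ x)
    have hmem₃ : Q (V₃ y) ∈
        (LinearMap.range (V₃ : N₃ →ₗ[ℂ] H) ⊔ LinearMap.range (V₂ : N₂ →ₗ[ℂ] H)).topologicalClosure
          ⊓ (LinearMap.range (V₂ : N₂ →ₗ[ℂ] H))ᗮ := by
      constructor
      · refine Submodule.le_topologicalClosure _ ?_
        exact sub_mem (Submodule.mem_sup_left ⟨y, rfl⟩)
          (Submodule.mem_sup_right ⟨adjoint V₂ (V₃ y), rfl⟩)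
      · rintro _ ⟨z, rfl⟩
        exact hQ_orth z (V₃ y)
    have horth : ⟪Q (V₃ y), Q (V₁ x)⟫_ℂ = 0 := h3 hmem₁ _ hmem₃
    have hdecomp : (V₃ y : H) = Q (V₃ y) + V₂ (adjoint V₂ (V₃ y)) := by simp [hQdef]
    rw [hdecomp, inner_add_left, horth, hQ_orth, add_zero]
end

section
/- Let V₁, V₂, V₃ be isometries into a Hilbert space H with V₃*V₁ = V₃*V₂V₂*V₁, and set E_k = Ran V_k. Then (E₁ ⊔ E₃) ⊖ E₃ is contained in ((E₁ ⊔ E₂) ⊖ E₂) ⊕ ((E₃ ⊔ E₂) ⊖ E₃), and the two summands on the right are orthogonal. -/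
open ContinuousLinearMap

local notation "⟪" x ", " y "⟫_ℂ" => @inner ℂ _ _ x y

/-- If `V₃*V₁ = V₃*V₂V₂*V₁` for isometries `V₁, V₂, V₃` with `E_k = Ran V_k`,
then `(E₁ ⊔ E₃) ⊖ E₃ ⊆ ((E₁ ⊔ E₂) ⊖ E₂) ⊕ ((E₃ ⊔ E₂) ⊖ E₃)`, the summands being orthogonal. -/
theorem ominus_inclusion_of_factorization
    {N₁ N₂ N₃ H : Type*}
    [NormedAddCommGroup N₁] [InnerProductSpace ℂ N₁] [CompleteSpace N₁]
    [NormedAddCommGroup N₂] [InnerProductSpace ℂ N₂] [CompleteSpace N₂]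
    [NormedAddCommGroup N₃] [InnerProductSpace ℂ N₃] [CompleteSpace N₃]
    [NormedAddCommGroup H] [InnerProductSpace ℂ H] [CompleteSpace H]
    (V₁ : N₁ →L[ℂ] H) (V₂ : N₂ →L[ℂ] H) (V₃ : N₃ →L[ℂ] H)
    (hV₁ : ∀ x, ‖V₁ x‖ = ‖x‖) (hV₂ : ∀ x, ‖V₂ x‖ = ‖x‖) (hV₃ : ∀ x, ‖V₃ x‖ = ‖x‖)
    (hfac : adjoint V₃ ∘L V₁ = (adjoint V₃ ∘L V₂) ∘L (adjoint V₂ ∘L V₁)) :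
    ((LinearMap.range (V₁ : N₁ →ₗ[ℂ] H) ⊔ LinearMap.range (V₃ : N₃ →ₗ[ℂ] H)).topologicalClosure
        ⊓ (LinearMap.range (V₃ : N₃ →ₗ[ℂ] H))ᗮ ≤
      ((LinearMap.range (V₁ : N₁ →ₗ[ℂ] H) ⊔ LinearMap.range (V₂ : N₂ →ₗ[ℂ] H)).topologicalClosure
          ⊓ (LinearMap.range (V₂ : N₂ →ₗ[ℂ] H))ᗮ) ⊔
        ((LinearMap.range (V₃ : N₃ →ₗ[ℂ] H) ⊔ LinearMap.range (V₂ : N₂ →ₗ[ℂ] H)).topologicalClosure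
          ⊓ (LinearMap.range (V₃ : N₃ →ₗ[ℂ] H))ᗮ))
      ∧ ((LinearMap.range (V₁ : N₁ →ₗ[ℂ] H) ⊔ LinearMap.range (V₂ : N₂ →ₗ[ℂ] H)).topologicalClosure
          ⊓ (LinearMap.range (V₂ : N₂ →ₗ[ℂ] H))ᗮ ≤
        (((LinearMap.range (V₃ : N₃ →ₗ[ℂ] H) ⊔ LinearMap.range (V₂ : N₂ →ₗ[ℂ] H)).topologicalClosure
          ⊓ (LinearMap.range (V₃ : N₃ →ₗ[ℂ] H))ᗮ))ᗮ) := by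
  set E₁ := LinearMap.range (V₁ : N₁ →ₗ[ℂ] H) with hE₁
  set E₂ := LinearMap.range (V₂ : N₂ →ₗ[ℂ] H) with hE₂
  set E₃ := LinearMap.range (V₃ : N₃ →ₗ[ℂ] H) with hE₃
  set Q : H →L[ℂ] H := V₂ ∘L adjoint V₂ with hQ
  set P : H →L[ℂ] H := ContinuousLinearMap.id ℂ H - Q with hP
  -- V₂ preserves inner products
  have hinner2 : ∀ x y : N₂, ⟪V₂ x, V₂ y⟫_ℂ = ⟪x, y⟫_ℂ := by
    intro x y
    exact (⟨V₂.toLinearMap, hV₂⟩ : N₂ →ₗᵢ[ℂ] H).inner_map_map x y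
  -- V₂* V₂ = 1
  have hadj2 : ∀ v : N₂, adjoint V₂ (V₂ v) = v := by
    intro v
    refine ext_inner_left ℂ fun y => ?_
    rw [adjoint_inner_right, hinner2]
  have hPV₂ : ∀ v : N₂, P (V₂ v) = 0 := by
    intro v
    simp [hP, hQ, hadj2]
  -- key: V₃* P V₁ = 0
  have hkey : ∀ u : N₁, adjoint V₃ (P (V₁ u)) = 0 := by
    intro u
    have := congrFun (congrArg DFunLike.coe hfac) u
    simp only [ContinuousLinearMap.comp_apply] at this
    simp [hP, hQ, map_sub, this]
  -- P V₁ u ⊥ E₃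
  have hPV₁_E₃ : ∀ u : N₁, P (V₁ u) ∈ E₃ᗮ := by
    intro u
    rw [Submodule.mem_orthogonal]
    rintro _ ⟨w, rfl⟩
    rw [ContinuousLinearMap.coe_coe, ← adjoint_inner_right, hkey]
    simp
  -- P V₁ u ⊥ E₂
  have hPV₁_E₂ : ∀ u : N₁, P (V₁ u) ∈ E₂ᗮ := by
    intro u
    rw [Submodule.mem_orthogonal]
    rintro _ ⟨v, rfl⟩
    simp only [hP, hQ, ContinuousLinearMap.sub_apply, ContinuousLinearMap.id_apply,
      ContinuousLinearMap.comp_apply, inner_sub_right]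
    rw [ContinuousLinearMap.coe_coe, hinner2, adjoint_inner_right, sub_self]
  -- P V₁ u ∈ E₁ ⊔ E₂
  have hPV₁_mem : ∀ u : N₁, P (V₁ u) ∈ E₁ ⊔ E₂ := by
    intro u
    have : P (V₁ u) = V₁ u - V₂ (adjoint V₂ (V₁ u)) := by simp [hP, hQ]
    rw [this]
    exact Submodule.sub_mem _ (Submodule.mem_sup_left ⟨u, rfl⟩)
      (Submodule.mem_sup_right ⟨_, rfl⟩)
  -- Q x ∈ E₂ always
  have hQmem : ∀ x : H, Q x ∈ E₂ := fun x => ⟨adjoint V₂ x, rfl⟩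
  set F := (LinearMap.range ((P ∘L V₁ : N₁ →L[ℂ] H) : N₁ →ₗ[ℂ] H)).topologicalClosure with hF
  have hFclosed : IsClosed (F : Set H) := Submodule.isClosed_topologicalClosure _
  have hFE₂ : F ≤ E₂ᗮ := by
    refine (LinearMap.range ((P ∘L V₁ : N₁ →L[ℂ] H) : N₁ →ₗ[ℂ] H)).topologicalClosure_minimal ?_ E₂.isClosed_orthogonal
    rintro _ ⟨u, rfl⟩
    exact hPV₁_E₂ u
  have hFE₃ : F ≤ E₃ᗮ := by
    refine (LinearMap.range ((P ∘L V₁ : N₁ →L[ℂ] H) : N₁ →ₗ[ℂ] H)).topologicalClosure_minimal ?_ E₃.isClosed_orthogonal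
    rintro _ ⟨u, rfl⟩
    exact hPV₁_E₃ u
  have hFA : F ≤ (E₁ ⊔ E₂).topologicalClosure ⊓ E₂ᗮ := by
    refine le_inf ?_ hFE₂
    refine le_trans (Submodule.topologicalClosure_mono ?_) le_rfl
    rintro _ ⟨u, rfl⟩
    exact hPV₁_mem u
  -- E₂ ≤ Fᗮ
  have hE₂F : E₂ ≤ Fᗮ :=
    le_trans E₂.le_orthogonal_orthogonal (Submodule.orthogonal_le hFE₂)
  -- the map T := P - incl ∘ proj_F
  set T : H →L[ℂ] H := P - F.subtypeL ∘L F.orthogonalProjectionOnto with hT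
  -- T kills E₁
  have hTV₁ : ∀ u : N₁, T (V₁ u) = 0 := by
    intro u
    have hmem : P (V₁ u) ∈ F := Submodule.le_topologicalClosure _ ⟨u, rfl⟩
    have h2 : F.orthogonalProjectionOnto (Q (V₁ u)) = 0 :=
      Submodule.orthogonalProjectionOnto_apply_of_mem_orthogonal (hE₂F (hQmem _))
    have hsplit : F.orthogonalProjectionOnto (V₁ u) =
        F.orthogonalProjectionOnto (P (V₁ u)) + F.orthogonalProjectionOnto (Q (V₁ u)) := by
      rw [← map_add]
      congr 1
      simp [hP]
    have hcoe : (F.orthogonalProjectionOnto (V₁ u) : H) = P (V₁ u) := by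
      rw [hsplit, h2, add_zero]
      exact (Submodule.starProjection_eq_self_iff (K := F)).2 hmem
    simp [hT, hcoe]
  -- T sends E₃ into E₃ ⊔ E₂
  have hForth : Fᗮ = (LinearMap.range ((P ∘L V₁ : N₁ →L[ℂ] H) : N₁ →ₗ[ℂ] H))ᗮ := by
    rw [hF, ← Submodule.orthogonal_orthogonal_eq_closure,
      Submodule.triorthogonal_eq_orthogonal]
  have hPV₃_Forth : ∀ w : N₃, P (V₃ w) ∈ Fᗮ := by
    intro w
    rw [hForth, Submodule.mem_orthogonal]
    rintro _ ⟨u, rfl⟩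
    simp only [ContinuousLinearMap.coe_coe, ContinuousLinearMap.comp_apply]
    have hexp : P (V₃ w) = V₃ w - Q (V₃ w) := by simp [hP]
    rw [hexp, inner_sub_right]
    have e1 : ⟪P (V₁ u), V₃ w⟫_ℂ = 0 :=
      Submodule.inner_left_of_mem_orthogonal (⟨w, rfl⟩ : V₃ w ∈ E₃) (hPV₁_E₃ u)
    have e2 : ⟪P (V₁ u), Q (V₃ w)⟫_ℂ = 0 :=
      Submodule.inner_left_of_mem_orthogonal (hQmem (V₃ w)) (hPV₁_E₂ u)
    rw [e1, e2, sub_zero]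
  have hTV₃ : ∀ w : N₃, T (V₃ w) ∈ E₃ ⊔ E₂ := by
    intro w
    have hdecomp : V₃ w = P (V₃ w) + Q (V₃ w) := by simp [hP]
    have h1 : F.orthogonalProjectionOnto (P (V₃ w)) = 0 :=
      Submodule.orthogonalProjectionOnto_apply_of_mem_orthogonal (hPV₃_Forth w)
    have h2 : F.orthogonalProjectionOnto (Q (V₃ w)) = 0 :=
      Submodule.orthogonalProjectionOnto_apply_of_mem_orthogonal (hE₂F (hQmem _))
    have hdec3 : V₃ w = P (V₃ w) + Q (V₃ w) := by simp [hP]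
    have hsplit : F.orthogonalProjectionOnto (V₃ w) =
        F.orthogonalProjectionOnto (P (V₃ w)) + F.orthogonalProjectionOnto (Q (V₃ w)) := by
      rw [← map_add]
      exact congrArg _ hdec3
    have hcoe : (F.orthogonalProjectionOnto (V₃ w) : H) = 0 := by
      rw [hsplit, h1, h2]; simp
    have : T (V₃ w) = P (V₃ w) := by
      simp [hT, hcoe]
    rw [this]
    have hexp : P (V₃ w) = V₃ w - Q (V₃ w) := by simp [hP]
    rw [hexp]
    exact Submodule.sub_mem _ (Submodule.mem_sup_left ⟨w, rfl⟩)
      (Submodule.mem_sup_right (hQmem _))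
  -- T maps closure(E₁ ⊔ E₃) into closure(E₃ ⊔ E₂)
  have hTmap : (E₁ ⊔ E₃).topologicalClosure ≤
      ((E₃ ⊔ E₂).topologicalClosure).comap (T : H →ₗ[ℂ] H) := by
    refine Submodule.topologicalClosure_minimal (s := E₁ ⊔ E₃) ?_ ?_
    · rw [sup_le_iff]
      constructor
      · rintro _ ⟨u, rfl⟩
        simp only [Submodule.mem_comap, ContinuousLinearMap.coe_coe, hTV₁ u]
        exact Submodule.zero_mem _
      · rintro _ ⟨w, rfl⟩
        exact Submodule.le_topologicalClosure _ (hTV₃ w)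
    · exact (Submodule.isClosed_topologicalClosure _).preimage T.continuous
  -- P maps closure(E₁ ⊔ E₂) into E₃ᗮ
  have hPmap : (E₁ ⊔ E₂).topologicalClosure ≤ E₃ᗮ.comap (P : H →ₗ[ℂ] H) := by
    refine Submodule.topologicalClosure_minimal (s := E₁ ⊔ E₂) ?_
      (E₃.isClosed_orthogonal.preimage P.continuous)
    rw [sup_le_iff]
    constructor
    · rintro _ ⟨u, rfl⟩
      exact hPV₁_E₃ u
    · rintro _ ⟨v, rfl⟩
      simp only [Submodule.mem_comap, ContinuousLinearMap.coe_coe, hPV₂ v]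
      exact Submodule.zero_mem _
  -- elements of closure(E₁⊔E₂) ⊓ E₂ᗮ are fixed by P
  have hPfix : ∀ x : H, x ∈ E₂ᗮ → P x = x := by
    intro x hx
    have h0 : adjoint V₂ x = 0 := by
      refine ext_inner_left ℂ fun v => ?_
      rw [adjoint_inner_right]
      rw [Submodule.mem_orthogonal] at hx
      rw [hx (V₂ v) ⟨v, rfl⟩]
      simp
    simp [hP, hQ, h0]
  -- A ⊥ E₃
  have hA_E₃ : (E₁ ⊔ E₂).topologicalClosure ⊓ E₂ᗮ ≤ E₃ᗮ := by
    rintro x ⟨hx1, hx2⟩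
    have := hPmap hx1
    rwa [Submodule.mem_comap, ContinuousLinearMap.coe_coe, hPfix x hx2] at this
  constructor
  · -- the inclusion
    rintro x ⟨hx1, hx3⟩
    set p := (F.orthogonalProjectionOnto x : H) with hp
    have hpA : p ∈ (E₁ ⊔ E₂).topologicalClosure ⊓ E₂ᗮ := hFA (Submodule.coe_mem _)
    have hxp : x - p ∈ (E₃ ⊔ E₂).topologicalClosure ⊓ E₃ᗮ := by
      constructor
      · have hx' := hTmap hx1
        rw [Submodule.mem_comap] at hx'
        have hTx : T x = P x - p := by simp [hT]; rfl
        have : x - p = Q x + T x := by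
          rw [hTx]
          simp [hP]
          abel
        rw [this]
        exact Submodule.add_mem _
          (Submodule.le_topologicalClosure _ (Submodule.mem_sup_right (hQmem x))) hx'
      · exact Submodule.sub_mem _ hx3 (hFE₃ (Submodule.coe_mem _))
    have : x = p + (x - p) := by abel
    rw [this]
    exact Submodule.add_mem _ (Submodule.mem_sup_left hpA) (Submodule.mem_sup_right hxp)
  · -- orthogonality
    rintro a ⟨ha1, ha2⟩
    have haE₃ : a ∈ E₃ᗮ := hA_E₃ ⟨ha1, ha2⟩
    have haSup : a ∈ (E₃ ⊔ E₂)ᗮ := by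
      rw [Submodule.mem_orthogonal]
      intro u hu
      rw [Submodule.mem_sup] at hu
      obtain ⟨y, hy, z, hz, rfl⟩ := hu
      rw [inner_add_left, Submodule.inner_right_of_mem_orthogonal hy haE₃,
        Submodule.inner_right_of_mem_orthogonal hz ha2, add_zero]
    have haClos : a ∈ ((E₃ ⊔ E₂).topologicalClosure)ᗮ := by
      rwa [← Submodule.orthogonal_orthogonal_eq_closure,
        Submodule.triorthogonal_eq_orthogonal]
    exact Submodule.orthogonal_le (le_trans inf_le_left le_rfl) haClos
end

section
/- Let V₁, V₂, V₃ be isometries into a Hilbert space H with V₃*V₁ = V₃*V₂V₂*V₁; set A₂₁ = V₂*V₁, A₃₂ = V₃*V₂, E_k = Ran V_k. Then the following are equivalent: (1) Ran(I − A₃₂*A₃₂)^{1/2} ∩ Ran(I − A₂₁A₂₁*)^{1/2} = {0}; (2) the closure of Ran(I − V₃V₃*)V₁ equals the orthogonal direct sum of the closure of Ran(I − V₂V₂*)V₁ and the closure of Ran(I − V₃V₃*)V₂; (3) E₂ ⊆ E₁ ⊔ E₃. -/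
open ContinuousLinearMap
open scoped InnerProductSpace


namespace RegAux

variable {E F : Type*}
  [NormedAddCommGroup E] [InnerProductSpace ℂ E] [CompleteSpace E]
  [NormedAddCommGroup F] [InnerProductSpace ℂ F] [CompleteSpace F]

lemma adjoint_comp_self (V : E →L[ℂ] F) (hV : ∀ x, ‖V x‖ = ‖x‖) :
    adjoint V ∘L V = 1 := by
  ext x
  refine ext_inner_right ℂ fun y => ?_
  have h : ⟪V x, V y⟫_ℂ = ⟪x, y⟫_ℂ :=
    LinearIsometry.inner_map_map ⟨V.toLinearMap, hV⟩ x y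
  simpa [ContinuousLinearMap.comp_apply, adjoint_inner_left] using h

lemma aux_ineq (T : E →L[ℂ] F) (z : E) :
    ‖T z‖ ^ 2 - ‖adjoint T (T z)‖ ^ 2 ≤ ‖z‖ ^ 2 - ‖T z‖ ^ 2 := by
  have h1 : ‖T z‖ ^ 2 = RCLike.re ⟪adjoint T (T z), z⟫_ℂ := by
    rw [adjoint_inner_left, inner_self_eq_norm_sq]
  have h2 : RCLike.re ⟪adjoint T (T z), z⟫_ℂ ≤ ‖adjoint T (T z)‖ * ‖z‖ :=
    re_inner_le_norm _ _
  nlinarith [sq_nonneg (‖adjoint T (T z)‖ - ‖z‖)]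

lemma exists_seq_of_mem_closure {S : Submodule ℂ E} {w : E}
    (hw : w ∈ S.topologicalClosure) :
    ∃ f : ℕ → E, (∀ k, f k ∈ S) ∧ Filter.Tendsto f Filter.atTop (nhds w) := by
  have h : w ∈ closure (S : Set E) := hw
  exact mem_closure_iff_seq_limit.mp h

lemma eq_zero_of_inner_eq_zero {S : Submodule ℂ E} {w : E}
    (hw : w ∈ S.topologicalClosure) (h : ∀ u ∈ S, ⟪u, w⟫_ℂ = 0) : w = 0 := by
  obtain ⟨f, hf, hlim⟩ := exists_seq_of_mem_closure hw
  have h1 : Filter.Tendsto (fun k => ⟪f k, w⟫_ℂ) Filter.atTop (nhds ⟪w, w⟫_ℂ) :=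
    hlim.inner tendsto_const_nhds
  have h2 : Filter.Tendsto (fun k => ⟪f k, w⟫_ℂ) Filter.atTop (nhds 0) := by
    simpa [fun k => h (f k) (hf k)] using tendsto_const_nhds (α := ℂ) (f := Filter.atTop)
  exact inner_self_eq_zero.mp (tendsto_nhds_unique h1 h2)

lemma norm_le_of_sq_le_sq {a b : ℝ} (h : a ^ 2 ≤ b ^ 2) (ha : 0 ≤ a) (hb : 0 ≤ b) : a ≤ b := by
  nlinarith

lemma cauchySeq_of_dist_le₂ {G : Type*} [NormedAddCommGroup G]
    {u : ℕ → E} {v : ℕ → F} {v' : ℕ → G}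
    (h : ∀ k j, ‖u k - u j‖ ≤ ‖v k - v j‖ + ‖v' k - v' j‖)
    (hv : CauchySeq v) (hv' : CauchySeq v') : CauchySeq u := by
  rw [Metric.cauchySeq_iff] at hv hv' ⊢
  intro ε hε
  obtain ⟨N, hN⟩ := hv (ε / 2) (by linarith)
  obtain ⟨N', hN'⟩ := hv' (ε / 2) (by linarith)
  refine ⟨max N N', fun m hm n hn => ?_⟩
  have h1 := hN m (le_trans (le_max_left _ _) hm) n (le_trans (le_max_left _ _) hn)
  have h2 := hN' m (le_trans (le_max_right _ _) hm) n (le_trans (le_max_right _ _) hn)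
  have h3 := h m n
  rw [dist_eq_norm] at h1 h2 ⊢
  linarith

lemma cauchySeq_of_dist_le {u : ℕ → E} {v : ℕ → F}
    (h : ∀ k j, ‖u k - u j‖ ≤ ‖v k - v j‖) (hv : CauchySeq v) : CauchySeq u := by
  refine cauchySeq_of_dist_le₂ (v' := fun _ => (0 : ℂ)) (fun k j => ?_) hv (cauchySeq_const (0 : ℂ))
  simpa using h k j

lemma closure_sup_le {p q : Submodule ℂ E}
    (h : ∀ u ∈ p, ∀ v ∈ q, ⟪u, v⟫_ℂ = 0) :
    (p ⊔ q).topologicalClosure ≤ p.topologicalClosure ⊔ q.topologicalClosure := by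
  intro w hw
  obtain ⟨f, hf, hlim⟩ := exists_seq_of_mem_closure hw
  choose u hu v hv huv using fun k => Submodule.mem_sup.mp (hf k)
  have key : ∀ k j, ‖u k - u j‖ ≤ ‖f k - f j‖ := by
    intro k j
    have horth : ⟪u k - u j, v k - v j⟫_ℂ = 0 := by
      have h1 := h _ (p.sub_mem (hu k) (hu j)) _ (q.sub_mem (hv k) (hv j))
      exact h1
    have hpy := norm_add_sq_eq_norm_sq_add_norm_sq_of_inner_eq_zero _ _ horth
    have heq : f k - f j = (u k - u j) + (v k - v j) := by
      rw [← huv k, ← huv j]; abel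
    rw [heq]
    refine norm_le_of_sq_le_sq ?_ (norm_nonneg _) (norm_nonneg _)
    nlinarith [hpy, mul_self_nonneg ‖v k - v j‖]
  have hfC : CauchySeq f := hlim.cauchySeq
  have huC : CauchySeq u := cauchySeq_of_dist_le key hfC
  obtain ⟨a, ha⟩ := cauchySeq_tendsto_of_complete huC
  have hvlim : Filter.Tendsto v Filter.atTop (nhds (w - a)) := by
    have h1 : ∀ k, v k = f k - u k := fun k => by rw [← huv k]; abel
    have h2 := hlim.sub ha
    have h3 : v = fun k => f k - u k := funext h1
    rw [h3]; exact h2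
  have hap : a ∈ p.topologicalClosure :=
    mem_closure_of_tendsto ha (Filter.Eventually.of_forall hu)
  have hbq : w - a ∈ q.topologicalClosure :=
    mem_closure_of_tendsto hvlim (Filter.Eventually.of_forall hv)
  have : a + (w - a) ∈ p.topologicalClosure ⊔ q.topologicalClosure :=
    Submodule.add_mem_sup hap hbq
  simpa using this

lemma sa_inner {T : E →L[ℂ] E} (hT : IsSelfAdjoint T) (x y : E) :
    ⟪T x, y⟫_ℂ = ⟪x, T y⟫_ℂ := by
  conv_lhs => rw [← hT.adjoint_eq]
  rw [adjoint_inner_left]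

lemma tendsto_clm (T : E →L[ℂ] F) {s : ℕ → E} {l : E}
    (h : Filter.Tendsto s Filter.atTop (nhds l)) :
    Filter.Tendsto (fun k => T (s k)) Filter.atTop (nhds (T l)) := by
  have h2 := (T.continuous.tendsto l).comp h
  simpa [Function.comp_def] using h2

end RegAux

open RegAux Filter
set_option maxHeartbeats 2000000


/-- For isometries `V₁, V₂, V₃` with `V₃*V₁ = V₃*V₂V₂*V₁`,
`A₂₁ = V₂*V₁`, `A₃₂ = V₃*V₂`, and `R, Q` the positive square roots of `1 − A₃₂*A₃₂`
and `1 − A₂₁A₂₁*` respectively, the following are equivalent: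
(1) `Ran R ∩ Ran Q = {0}`;
(2) `clos Ran (I − V₃V₃*)V₁ = clos Ran (I − V₂V₂*)V₁ ⊕ clos Ran (I − V₃V₃*)V₂`;
(3) `E₂ ⊆ E₁ ⊔ E₃`. -/
theorem regularity_tfae
    {N₁ N₂ N₃ H : Type*}
    [NormedAddCommGroup N₁] [InnerProductSpace ℂ N₁] [CompleteSpace N₁]
    [NormedAddCommGroup N₂] [InnerProductSpace ℂ N₂] [CompleteSpace N₂]
    [NormedAddCommGroup N₃] [InnerProductSpace ℂ N₃] [CompleteSpace N₃]
    [NormedAddCommGroup H] [InnerProductSpace ℂ H] [CompleteSpace H]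
    (V₁ : N₁ →L[ℂ] H) (V₂ : N₂ →L[ℂ] H) (V₃ : N₃ →L[ℂ] H)
    (hV₁ : ∀ x, ‖V₁ x‖ = ‖x‖) (hV₂ : ∀ x, ‖V₂ x‖ = ‖x‖) (hV₃ : ∀ x, ‖V₃ x‖ = ‖x‖)
    (hfac : adjoint V₃ ∘L V₁ = (adjoint V₃ ∘L V₂) ∘L (adjoint V₂ ∘L V₁))
    (R Q : N₂ →L[ℂ] N₂) (hR : R.IsPositive) (hQ : Q.IsPositive)
    (hR2 : R ∘L R = 1 - adjoint (adjoint V₃ ∘L V₂) ∘L (adjoint V₃ ∘L V₂))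
    (hQ2 : Q ∘L Q = 1 - (adjoint V₂ ∘L V₁) ∘L adjoint (adjoint V₂ ∘L V₁)) :
    ((LinearMap.range (R : N₂ →ₗ[ℂ] N₂) ⊓ LinearMap.range (Q : N₂ →ₗ[ℂ] N₂) = ⊥) ↔
        ((LinearMap.range (((1 - V₃ ∘L adjoint V₃) ∘L V₁ : N₁ →ₗ[ℂ] H))).topologicalClosure
          = (LinearMap.range (((1 - V₂ ∘L adjoint V₂) ∘L V₁ : N₁ →ₗ[ℂ] H))).topologicalClosure
            ⊔ (LinearMap.range (((1 - V₃ ∘L adjoint V₃) ∘L V₂ : N₂ →ₗ[ℂ] H))).topologicalClosure))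
      ∧ (((LinearMap.range (((1 - V₃ ∘L adjoint V₃) ∘L V₁ : N₁ →ₗ[ℂ] H))).topologicalClosure
          = (LinearMap.range (((1 - V₂ ∘L adjoint V₂) ∘L V₁ : N₁ →ₗ[ℂ] H))).topologicalClosure
            ⊔ (LinearMap.range (((1 - V₃ ∘L adjoint V₃) ∘L V₂ : N₂ →ₗ[ℂ] H))).topologicalClosure) ↔
        (LinearMap.range (V₂ : N₂ →ₗ[ℂ] H) ≤
          (LinearMap.range (V₁ : N₁ →ₗ[ℂ] H) ⊔ LinearMap.range (V₃ : N₃ →ₗ[ℂ] H)).topologicalClosure)) := by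
  have hW₂ : adjoint V₂ ∘L V₂ = 1 := adjoint_comp_self V₂ hV₂
  have hW₃ : adjoint V₃ ∘L V₃ = 1 := adjoint_comp_self V₃ hV₃
  set A : N₁ →L[ℂ] N₂ := adjoint V₂ ∘L V₁ with hAdef
  set B : N₂ →L[ℂ] N₃ := adjoint V₃ ∘L V₂ with hBdef
  set G : N₁ →L[ℂ] H := (1 - V₃ ∘L adjoint V₃) ∘L V₁ with hGdef
  set G₁ : N₁ →L[ℂ] H := (1 - V₂ ∘L adjoint V₂) ∘L V₁ with hG₁def
  set G₂ : N₂ →L[ℂ] H := (1 - V₃ ∘L adjoint V₃) ∘L V₂ with hG₂def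
  set M : Submodule ℂ H := (LinearMap.range (G : N₁ →ₗ[ℂ] H)).topologicalClosure with hMdef
  set M₁ : Submodule ℂ H := (LinearMap.range (G₁ : N₁ →ₗ[ℂ] H)).topologicalClosure with hM₁def
  set M₂ : Submodule ℂ H := (LinearMap.range (G₂ : N₂ →ₗ[ℂ] H)).topologicalClosure with hM₂def
  set L : Submodule ℂ H := (LinearMap.range (V₁ : N₁ →ₗ[ℂ] H) ⊔ LinearMap.range (V₃ : N₃ →ₗ[ℂ] H)).topologicalClosure
    with hLdef
  set NN : Submodule ℂ H :=
    (LinearMap.range (G₁ : N₁ →ₗ[ℂ] H) ⊔ LinearMap.range (G₂ : N₂ →ₗ[ℂ] H)).topologicalClosure with hNNdef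
  -- pointwise facts
  have hfx : ∀ x, adjoint V₃ (V₁ x) = B (A x) := by
    intro x
    have h := ContinuousLinearMap.ext_iff.mp hfac x
    simpa using h
  have hW₂x : ∀ n, adjoint V₂ (V₂ n) = n := by
    intro n; have h := ContinuousLinearMap.ext_iff.mp hW₂ n; simpa using h
  have hW₃x : ∀ c, adjoint V₃ (V₃ c) = c := by
    intro c; have h := ContinuousLinearMap.ext_iff.mp hW₃ c; simpa using h
  have hR2x : ∀ n, R (R n) = n - adjoint B (B n) := by
    intro n; have h := ContinuousLinearMap.ext_iff.mp hR2 n; simpa using h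
  have hQ2x : ∀ n, Q (Q n) = n - A (adjoint A n) := by
    intro n; have h := ContinuousLinearMap.ext_iff.mp hQ2 n; simpa using h
  have g1pt : ∀ a, G₁ a = V₁ a - V₂ (A a) := by
    intro a; simp [hG₁def, hAdef, ContinuousLinearMap.sub_apply]
  have g2pt : ∀ n, G₂ n = V₂ n - V₃ (B n) := by
    intro n; simp [hG₂def, hBdef, ContinuousLinearMap.sub_apply]
  have gpt' : ∀ x, G x = V₁ x - V₃ (B (A x)) := by
    intro x
    simp only [hGdef, ContinuousLinearMap.comp_apply, ContinuousLinearMap.sub_apply,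
      ContinuousLinearMap.one_apply]
    rw [hfx]
  have gpt : ∀ x, G x = G₁ x + G₂ (A x) := by
    intro x; rw [gpt', g1pt, g2pt]; abel
  -- inner products of V's
  have p11 : ∀ x y, ⟪V₁ x, V₁ y⟫_ℂ = ⟪x, y⟫_ℂ := fun x y =>
    LinearIsometry.inner_map_map ⟨V₁.toLinearMap, hV₁⟩ x y
  have p22 : ∀ x y, ⟪V₂ x, V₂ y⟫_ℂ = ⟪x, y⟫_ℂ := fun x y =>
    LinearIsometry.inner_map_map ⟨V₂.toLinearMap, hV₂⟩ x y
  have p33 : ∀ x y, ⟪V₃ x, V₃ y⟫_ℂ = ⟪x, y⟫_ℂ := fun x y =>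
    LinearIsometry.inner_map_map ⟨V₃.toLinearMap, hV₃⟩ x y
  have p12 : ∀ x n, ⟪V₁ x, V₂ n⟫_ℂ = ⟪A x, n⟫_ℂ := by
    intro x n; rw [← adjoint_inner_left V₂]; rfl
  have p21 : ∀ n x, ⟪V₂ n, V₁ x⟫_ℂ = ⟪n, A x⟫_ℂ := by
    intro n x; rw [← adjoint_inner_right V₂]; rfl
  have p13 : ∀ x c, ⟪V₁ x, V₃ c⟫_ℂ = ⟪B (A x), c⟫_ℂ := by
    intro x c; rw [← adjoint_inner_left V₃, hfx]
  have p31 : ∀ c x, ⟪V₃ c, V₁ x⟫_ℂ = ⟪c, B (A x)⟫_ℂ := by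
    intro c x; rw [← adjoint_inner_right V₃, hfx]
  have p23 : ∀ n c, ⟪V₂ n, V₃ c⟫_ℂ = ⟪B n, c⟫_ℂ := by
    intro n c; rw [← adjoint_inner_left V₃]; rfl
  have p32 : ∀ c n, ⟪V₃ c, V₂ n⟫_ℂ = ⟪c, B n⟫_ℂ := by
    intro c n; rw [← adjoint_inner_right V₃]; rfl
  -- inner products of generators
  have F1 : ∀ a n, ⟪G₁ a, G₂ n⟫_ℂ = 0 := by
    intro a n
    rw [g1pt, g2pt, inner_sub_left, inner_sub_right, inner_sub_right,
      p12, p13, p22, p23]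
    ring
  have F1' : ∀ n a, ⟪G₂ n, G₁ a⟫_ℂ = 0 := by
    intro n a
    rw [← inner_conj_symm, F1, map_zero]
  have F2 : ∀ a a', ⟪G₁ a, G₁ a'⟫_ℂ = ⟪a, a'⟫_ℂ - ⟪A a, A a'⟫_ℂ := by
    intro a a'
    rw [g1pt, g1pt, inner_sub_left, inner_sub_right, inner_sub_right,
      p11, p12, p21, p22]
    ring
  have F3a : ∀ n n', ⟪G₂ n, G₂ n'⟫_ℂ = ⟪n, n'⟫_ℂ - ⟪B n, B n'⟫_ℂ := by
    intro n n'
    rw [g2pt, g2pt, inner_sub_left, inner_sub_right, inner_sub_right,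
      p22, p23, p32, p33]
    ring
  have hRR : ∀ n n', ⟪R n, R n'⟫_ℂ = ⟪n, n'⟫_ℂ - ⟪B n, B n'⟫_ℂ := by
    intro n n'
    rw [sa_inner hR.isSelfAdjoint, hR2x, inner_sub_right, adjoint_inner_right]
  have hQQ : ∀ n n', ⟪Q n, Q n'⟫_ℂ = ⟪n, n'⟫_ℂ - ⟪adjoint A n, adjoint A n'⟫_ℂ := by
    intro n n'
    rw [sa_inner hQ.isSelfAdjoint, hQ2x, inner_sub_right, ← adjoint_inner_left A]
  have F3 : ∀ n n', ⟪G₂ n, G₂ n'⟫_ℂ = ⟪R n, R n'⟫_ℂ := by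
    intro n n'; rw [F3a, hRR]
  have F4 : ∀ x a, ⟪G x, G₁ a⟫_ℂ = ⟪x, a⟫_ℂ - ⟪A x, A a⟫_ℂ := by
    intro x a
    rw [gpt, inner_add_left, F1', F2]
    ring
  have F5 : ∀ x n, ⟪G x, G₂ n⟫_ℂ = ⟪R (A x), R n⟫_ℂ := by
    intro x n
    rw [gpt, inner_add_left, F1, F3]
    ring
  -- norm identities
  have nG₁ : ∀ a, ‖G₁ a‖ ^ 2 = ‖a‖ ^ 2 - ‖A a‖ ^ 2 := by
    intro a
    have h := F2 a a
    rw [inner_self_eq_norm_sq_to_K, inner_self_eq_norm_sq_to_K,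
      inner_self_eq_norm_sq_to_K] at h
    exact_mod_cast h
  have nG₂ : ∀ n, ‖G₂ n‖ ^ 2 = ‖R n‖ ^ 2 := by
    intro n
    have h := F3 n n
    rw [inner_self_eq_norm_sq_to_K, inner_self_eq_norm_sq_to_K] at h
    exact_mod_cast h
  have nG₂' : ∀ n, ‖G₂ n‖ = ‖R n‖ := by
    intro n
    refine le_antisymm (norm_le_of_sq_le_sq (nG₂ n).le (norm_nonneg _) (norm_nonneg _))
      (norm_le_of_sq_le_sq (nG₂ n).ge (norm_nonneg _) (norm_nonneg _))
  have nQ : ∀ n, ‖Q n‖ ^ 2 = ‖n‖ ^ 2 - ‖adjoint A n‖ ^ 2 := by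
    intro n
    have h := hQQ n n
    rw [inner_self_eq_norm_sq_to_K, inner_self_eq_norm_sq_to_K,
      inner_self_eq_norm_sq_to_K] at h
    exact_mod_cast h
  have nQA : ∀ a, ‖Q (A a)‖ ^ 2 ≤ ‖G₁ a‖ ^ 2 := by
    intro a
    rw [nQ, nG₁]
    exact aux_ineq A a
  have nG₁adj : ∀ c, ‖G₁ (adjoint A c)‖ ≤ ‖Q c‖ := by
    intro c
    refine norm_le_of_sq_le_sq ?_ (norm_nonneg _) (norm_nonneg _)
    rw [nG₁, nQ]
    have h := aux_ineq (adjoint A) c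
    rwa [adjoint_adjoint] at h
  -- lattice facts
  have hrangeG : LinearMap.range (G : N₁ →ₗ[ℂ] H) ≤ LinearMap.range (G₁ : N₁ →ₗ[ℂ] H) ⊔ LinearMap.range (G₂ : N₂ →ₗ[ℂ] H) := by
    rintro _ ⟨x, rfl⟩
    rw [ContinuousLinearMap.coe_coe, gpt]
    exact Submodule.add_mem_sup (LinearMap.mem_range_self _ x) (LinearMap.mem_range_self _ (A x))
  have hM_le_NN : M ≤ NN :=
    Submodule.topologicalClosure_minimal _
      (hrangeG.trans (Submodule.le_topologicalClosure _))
      (Submodule.isClosed_topologicalClosure _)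
  have hNN_le_sup : NN ≤ M₁ ⊔ M₂ := by
    refine closure_sup_le ?_
    rintro _ ⟨a, rfl⟩ _ ⟨n, rfl⟩
    exact F1 a n
  have hM₁_le_NN : M₁ ≤ NN :=
    Submodule.topologicalClosure_mono le_sup_left
  have hM₂_le_NN : M₂ ≤ NN :=
    Submodule.topologicalClosure_mono le_sup_right
  haveI : CompleteSpace M := (Submodule.isClosed_topologicalClosure _).completeSpace_coe
  -- the four implications
  have h12 : LinearMap.range (R : N₂ →ₗ[ℂ] N₂) ⊓ LinearMap.range (Q : N₂ →ₗ[ℂ] N₂) = ⊥ → M = M₁ ⊔ M₂ := by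
    intro h1
    have key : ∀ w ∈ NN, (∀ x, ⟪G x, w⟫_ℂ = 0) → w = 0 := by
      intro w hw hperp
      obtain ⟨f, hf, hlim⟩ := exists_seq_of_mem_closure hw
      choose u hu v hv huv using fun k => Submodule.mem_sup.mp (hf k)
      choose a ha using fun k => LinearMap.mem_range.mp (hu k)
      choose n hn using fun k => LinearMap.mem_range.mp (hv k)
      have hfk : ∀ k, f k = G₁ (a k) + G₂ (n k) := by
        intro k; simp only [ContinuousLinearMap.coe_coe] at ha hn; rw [ha, hn, huv]
      have hnormsq : ∀ k j, ‖f k - f j‖ ^ 2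
          = ‖G₁ (a k - a j)‖ ^ 2 + ‖G₂ (n k - n j)‖ ^ 2 := by
        intro k j
        have hfdiff : f k - f j = G₁ (a k - a j) + G₂ (n k - n j) := by
          rw [hfk k, hfk j, map_sub, map_sub]; abel
        rw [hfdiff]
        simpa only [pow_two] using
          norm_add_sq_eq_norm_sq_add_norm_sq_of_inner_eq_zero _ _ (F1 _ _)
      have hdistR : ∀ k j, ‖R (n k) - R (n j)‖ ≤ ‖f k - f j‖ := by
        intro k j
        refine norm_le_of_sq_le_sq ?_ (norm_nonneg _) (norm_nonneg _)
        rw [hnormsq k j, ← map_sub, nG₂ (n k - n j)]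
        nlinarith [sq_nonneg ‖G₁ (a k - a j)‖]
      have hdistQ : ∀ k j, ‖Q (A (a k)) - Q (A (a j))‖ ≤ ‖f k - f j‖ := by
        intro k j
        refine norm_le_of_sq_le_sq ?_ (norm_nonneg _) (norm_nonneg _)
        rw [hnormsq k j]
        have h5 : ‖Q (A (a k)) - Q (A (a j))‖ ^ 2 ≤ ‖G₁ (a k - a j)‖ ^ 2 := by
          rw [← map_sub, ← map_sub]; exact nQA _
        nlinarith [sq_nonneg ‖G₂ (n k - n j)‖]
      obtain ⟨r, hr⟩ := cauchySeq_tendsto_of_complete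
        (cauchySeq_of_dist_le hdistR hlim.cauchySeq)
      obtain ⟨q, hq⟩ := cauchySeq_tendsto_of_complete
        (cauchySeq_of_dist_le hdistQ hlim.cauchySeq)
      have hrmem : r ∈ (LinearMap.range (R : N₂ →ₗ[ℂ] N₂)).topologicalClosure :=
        mem_closure_of_tendsto hr
          (Filter.Eventually.of_forall fun k => LinearMap.mem_range_self _ _)
      set φ : ℕ → N₁ := fun k => (a k - adjoint A (A (a k))) + adjoint A (R (R (n k)))
        with hφdef
      have hweak : ∀ y : N₁, Filter.Tendsto (fun k => ⟪y, φ k⟫_ℂ) Filter.atTop (nhds 0) := by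
        intro y
        have h5 : ∀ k, ⟪G y, f k⟫_ℂ = ⟪y, φ k⟫_ℂ := by
          intro k
          rw [hfk, inner_add_right, F4, F5]
          simp only [hφdef]
          rw [inner_add_right, inner_sub_right, adjoint_inner_right, adjoint_inner_right,
            sa_inner hR.isSelfAdjoint]
        have t1 : Filter.Tendsto (fun k => ⟪G y, f k⟫_ℂ) Filter.atTop
            (nhds ⟪G y, w⟫_ℂ) := tendsto_const_nhds.inner hlim
        rw [hperp y] at t1
        have hfe : (fun k => ⟪G y, f k⟫_ℂ) = fun k => ⟪y, φ k⟫_ℂ := funext h5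
        rwa [hfe] at t1
      have hid : ∀ k, A (φ k)
          = R (R (n k)) - Q (Q (R (R (n k)))) + Q (Q (A (a k))) := by
        intro k
        simp only [hφdef]
        rw [hQ2x (R (R (n k))), hQ2x (A (a k))]
        simp only [map_add, map_sub]
        abel
      have hψ : Filter.Tendsto (fun k => A (φ k)) Filter.atTop
          (nhds (R r - Q (Q (R r)) + Q q)) := by
        have t1 : Filter.Tendsto (fun k => R (R (n k))) Filter.atTop (nhds (R r)) :=
          tendsto_clm R hr
        have t2 : Filter.Tendsto (fun k => Q (Q (R (R (n k))))) Filter.atTop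
            (nhds (Q (Q (R r)))) := tendsto_clm Q (tendsto_clm Q t1)
        have t3 : Filter.Tendsto (fun k => Q (Q (A (a k)))) Filter.atTop
            (nhds (Q q)) := tendsto_clm Q hq
        have t4 := (t1.sub t2).add t3
        have hfe : (fun k => A (φ k))
            = fun k => R (R (n k)) - Q (Q (R (R (n k)))) + Q (Q (A (a k))) := funext hid
        rwa [hfe]
      have hψ0 : R r - Q (Q (R r)) + Q q = 0 := by
        refine ext_inner_left ℂ fun y => ?_
        rw [inner_zero_right]
        have t4 : Filter.Tendsto (fun k => ⟪y, A (φ k)⟫_ℂ) Filter.atTop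
            (nhds ⟪y, R r - Q (Q (R r)) + Q q⟫_ℂ) := tendsto_const_nhds.inner hψ
        have t5 : Filter.Tendsto (fun k => ⟪y, A (φ k)⟫_ℂ) Filter.atTop (nhds 0) := by
          have hfe : (fun k => ⟪y, A (φ k)⟫_ℂ) = fun k => ⟪adjoint A y, φ k⟫_ℂ := by
            funext k
            rw [adjoint_inner_left]
          rw [hfe]
          exact hweak _
        exact tendsto_nhds_unique t4 t5
      have h6 : R r = Q (Q (R r)) - Q q := by
        rw [← sub_eq_zero, ← hψ0]
        abel
      have hRr0 : R r = 0 := by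
        have hmem : R r ∈ LinearMap.range (R : N₂ →ₗ[ℂ] N₂) ⊓ LinearMap.range (Q : N₂ →ₗ[ℂ] N₂) := by
          refine ⟨⟨r, rfl⟩, ⟨Q (R r) - q, ?_⟩⟩
          rw [ContinuousLinearMap.coe_coe, map_sub, ← h6]
        rw [h1] at hmem
        exact (Submodule.mem_bot ℂ).mp hmem
      have hr0 : r = 0 := by
        refine eq_zero_of_inner_eq_zero (S := LinearMap.range (R : N₂ →ₗ[ℂ] N₂)) hrmem ?_
        rintro _ ⟨m, rfl⟩
        rw [ContinuousLinearMap.coe_coe, sa_inner hR.isSelfAdjoint, hRr0, inner_zero_right]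
      have hwperp₂ : ∀ m, ⟪G₂ m, w⟫_ℂ = 0 := by
        intro m
        have t1 : Filter.Tendsto (fun k => ⟪G₂ m, f k⟫_ℂ) Filter.atTop
            (nhds ⟪G₂ m, w⟫_ℂ) := tendsto_const_nhds.inner hlim
        have h5 : ∀ k, ⟪G₂ m, f k⟫_ℂ = ⟪R m, R (n k)⟫_ℂ := by
          intro k
          rw [hfk, inner_add_right, F1', F3]
          ring
        have hfe : (fun k => ⟪G₂ m, f k⟫_ℂ) = fun k => ⟪R m, R (n k)⟫_ℂ := funext h5
        rw [hfe] at t1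
        have t2 : Filter.Tendsto (fun k => ⟪R m, R (n k)⟫_ℂ) Filter.atTop
            (nhds ⟪R m, r⟫_ℂ) := tendsto_const_nhds.inner hr
        have h7 := tendsto_nhds_unique t1 t2
        rw [hr0, inner_zero_right] at h7
        exact h7
      have hwperp₁ : ∀ x, ⟪G₁ x, w⟫_ℂ = 0 := by
        intro x
        have h5 : G₁ x = G x - G₂ (A x) := by rw [gpt]; abel
        rw [h5, inner_sub_left, hperp, hwperp₂, sub_zero]
      refine eq_zero_of_inner_eq_zero (S := LinearMap.range (G₁ : N₁ →ₗ[ℂ] H) ⊔ LinearMap.range (G₂ : N₂ →ₗ[ℂ] H)) hw ?_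
      intro s hs
      obtain ⟨y, hy, z, hz, hyz⟩ := Submodule.mem_sup.mp hs
      obtain ⟨x, rfl⟩ := hy
      obtain ⟨m, rfl⟩ := hz
      rw [← hyz, inner_add_left, ContinuousLinearMap.coe_coe, ContinuousLinearMap.coe_coe, hwperp₁, hwperp₂, add_zero]
    have hNN_le_M : NN ≤ M := by
      intro w hw
      have hPw : (Submodule.orthogonalProjectionOnto M w : H) ∈ M := SetLike.coe_mem _
      have hw' : w - (Submodule.orthogonalProjectionOnto M w : H) ∈ NN :=
        NN.sub_mem hw (hM_le_NN hPw)
      have hperp : ∀ x, ⟪G x, w - (Submodule.orthogonalProjectionOnto M w : H)⟫_ℂ = 0 := by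
        intro x
        have hGx : G x ∈ M := Submodule.le_topologicalClosure _ (LinearMap.mem_range_self _ x)
        exact (Submodule.mem_orthogonal _ _).mp
          (Submodule.sub_starProjection_mem_orthogonal w) _ hGx
      have h0 := key _ hw' hperp
      have h7 : w = (Submodule.orthogonalProjectionOnto M w : H) := sub_eq_zero.mp h0
      rw [h7]
      exact hPw
    exact le_antisymm (hM_le_NN.trans hNN_le_sup)
      (sup_le (hM₁_le_NN.trans hNN_le_M) (hM₂_le_NN.trans hNN_le_M))
  have h21 : M = M₁ ⊔ M₂ → LinearMap.range (R : N₂ →ₗ[ℂ] N₂) ⊓ LinearMap.range (Q : N₂ →ₗ[ℂ] N₂) = ⊥ := by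
    intro h2
    rw [eq_bot_iff]
    rintro p ⟨hpR, hpQ⟩
    obtain ⟨n₀, hn₀⟩ := hpR
    obtain ⟨b₀, hb₀⟩ := hpQ
    rw [Submodule.mem_bot]
    haveI : CompleteSpace ((LinearMap.range (R : N₂ →ₗ[ℂ] N₂)).topologicalClosure) :=
      (Submodule.isClosed_topologicalClosure _).completeSpace_coe
    haveI : CompleteSpace ((LinearMap.range (Q : N₂ →ₗ[ℂ] N₂)).topologicalClosure) :=
      (Submodule.isClosed_topologicalClosure _).completeSpace_coe
    set r : N₂ := (Submodule.orthogonalProjectionOnto (LinearMap.range (R : N₂ →ₗ[ℂ] N₂)).topologicalClosure n₀ : N₂)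
      with hrdef
    set w₀ : N₂ := (Submodule.orthogonalProjectionOnto (LinearMap.range (Q : N₂ →ₗ[ℂ] N₂)).topologicalClosure b₀ : N₂)
      with hw₀def
    have hrKR : r ∈ (LinearMap.range (R : N₂ →ₗ[ℂ] N₂)).topologicalClosure := by
      rw [hrdef]; exact SetLike.coe_mem _
    have hw₀KQ : w₀ ∈ (LinearMap.range (Q : N₂ →ₗ[ℂ] N₂)).topologicalClosure := by
      rw [hw₀def]; exact SetLike.coe_mem _
    have hRr : R r = p := by
      have hz : R (n₀ - r) = 0 := by
        refine ext_inner_left ℂ fun v => ?_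
        rw [inner_zero_right, ← sa_inner hR.isSelfAdjoint]
        refine (Submodule.mem_orthogonal _ _).mp
          (Submodule.sub_starProjection_mem_orthogonal n₀) _ ?_
        exact Submodule.le_topologicalClosure _ (LinearMap.mem_range_self _ v)
      have h4 : R n₀ - R r = 0 := by rw [← map_sub]; exact hz
      rw [← ContinuousLinearMap.coe_coe R, hn₀] at h4
      exact (sub_eq_zero.mp h4).symm
    have hQw₀ : Q w₀ = p := by
      have hz : Q (b₀ - w₀) = 0 := by
        refine ext_inner_left ℂ fun v => ?_
        rw [inner_zero_right, ← sa_inner hQ.isSelfAdjoint]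
        refine (Submodule.mem_orthogonal _ _).mp
          (Submodule.sub_starProjection_mem_orthogonal b₀) _ ?_
        exact Submodule.le_topologicalClosure _ (LinearMap.mem_range_self _ v)
      have h4 : Q b₀ - Q w₀ = 0 := by rw [← map_sub]; exact hz
      rw [← ContinuousLinearMap.coe_coe Q, hb₀] at h4
      exact (sub_eq_zero.mp h4).symm
    obtain ⟨g, hg, hglim⟩ := exists_seq_of_mem_closure hrKR
    choose nseq hnseq using fun k => LinearMap.mem_range.mp (hg k)
    have hRlim : Filter.Tendsto (fun k => R (nseq k)) Filter.atTop (nhds r) := by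
      have hfe : (fun k => R (nseq k)) = g := funext hnseq
      rw [hfe]; exact hglim
    obtain ⟨g', hg', hglim'⟩ := exists_seq_of_mem_closure hw₀KQ
    choose bseq hbseq using fun k => LinearMap.mem_range.mp (hg' k)
    have hQlim : Filter.Tendsto (fun k => Q (bseq k)) Filter.atTop (nhds w₀) := by
      have hfe : (fun k => Q (bseq k)) = g' := funext hbseq
      rw [hfe]; exact hglim'
    set aseq : ℕ → N₁ := fun k => -(adjoint A (bseq k)) with haseqdef
    set wseq : ℕ → H := fun k => G₁ (aseq k) + G₂ (nseq k) with hwseqdef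
    have hwdist : ∀ k j, ‖wseq k - wseq j‖
        ≤ ‖Q (bseq k) - Q (bseq j)‖ + ‖R (nseq k) - R (nseq j)‖ := by
      intro k j
      have hd : wseq k - wseq j = G₁ (aseq k - aseq j) + G₂ (nseq k - nseq j) := by
        simp only [hwseqdef]
        rw [map_sub, map_sub]
        abel
      have hsq : ‖wseq k - wseq j‖ ^ 2
          = ‖G₁ (aseq k - aseq j)‖ ^ 2 + ‖G₂ (nseq k - nseq j)‖ ^ 2 := by
        rw [hd]
        simpa only [pow_two] using
          norm_add_sq_eq_norm_sq_add_norm_sq_of_inner_eq_zero _ _ (F1 _ _)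
      have h5 : ‖G₁ (aseq k - aseq j)‖ ≤ ‖Q (bseq k) - Q (bseq j)‖ := by
        have he : aseq k - aseq j = adjoint A (bseq j - bseq k) := by
          simp only [haseqdef]
          rw [map_sub]
          abel
        rw [he]
        have h6 := nG₁adj (bseq j - bseq k)
        rw [map_sub Q (bseq j) (bseq k)] at h6
        rw [norm_sub_rev (Q (bseq k))]
        exact h6
      have h7 : ‖G₂ (nseq k - nseq j)‖ = ‖R (nseq k) - R (nseq j)‖ := by
        rw [nG₂', map_sub]
      refine norm_le_of_sq_le_sq ?_ (norm_nonneg _) (by positivity)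
      nlinarith [hsq, h5, h7, norm_nonneg (G₁ (aseq k - aseq j)),
        norm_nonneg (Q (bseq k) - Q (bseq j)), norm_nonneg (R (nseq k) - R (nseq j))]
    have hwC : CauchySeq wseq :=
      cauchySeq_of_dist_le₂ hwdist hQlim.cauchySeq hRlim.cauchySeq
    obtain ⟨w, hwlim⟩ := cauchySeq_tendsto_of_complete hwC
    have hwM : w ∈ M := by
      refine (Submodule.isClosed_topologicalClosure _).mem_of_tendsto hwlim
        (Filter.Eventually.of_forall fun k => ?_)
      have h5 : wseq k ∈ M₁ ⊔ M₂ := by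
        simp only [hwseqdef]
        exact Submodule.add_mem_sup
          (Submodule.le_topologicalClosure _ (LinearMap.mem_range_self _ _))
          (Submodule.le_topologicalClosure _ (LinearMap.mem_range_self _ _))
      rw [← h2] at h5
      exact h5
    have hQpair : ∀ x b, ⟪x, adjoint A b⟫_ℂ - ⟪A x, A (adjoint A b)⟫_ℂ
        = ⟪Q (A x), Q b⟫_ℂ := by
      intro x b
      rw [adjoint_inner_right, sa_inner hQ.isSelfAdjoint, hQ2x, inner_sub_right]
    have hGw : ∀ x, ⟪G x, w⟫_ℂ = 0 := by
      intro x
      have t1 : Filter.Tendsto (fun k => ⟪G x, wseq k⟫_ℂ) Filter.atTop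
          (nhds ⟪G x, w⟫_ℂ) := tendsto_const_nhds.inner hwlim
      have h5 : ∀ k, ⟪G x, wseq k⟫_ℂ
          = -⟪Q (A x), Q (bseq k)⟫_ℂ + ⟪R (A x), R (nseq k)⟫_ℂ := by
        intro k
        simp only [hwseqdef]
        rw [inner_add_right, F4, F5, ← hQpair x (bseq k)]
        simp only [haseqdef, map_neg, inner_neg_right]
        ring
      have t2 : Filter.Tendsto (fun k => -⟪Q (A x), Q (bseq k)⟫_ℂ + ⟪R (A x), R (nseq k)⟫_ℂ)
          Filter.atTop (nhds (-⟪Q (A x), w₀⟫_ℂ + ⟪R (A x), r⟫_ℂ)) :=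
        (tendsto_const_nhds.inner hQlim).neg.add (tendsto_const_nhds.inner hRlim)
      have hval : -⟪Q (A x), w₀⟫_ℂ + ⟪R (A x), r⟫_ℂ = 0 := by
        rw [sa_inner hQ.isSelfAdjoint, hQw₀, sa_inner hR.isSelfAdjoint, hRr]
        ring
      rw [hval] at t2
      have hfe : (fun k => ⟪G x, wseq k⟫_ℂ)
          = fun k => -⟪Q (A x), Q (bseq k)⟫_ℂ + ⟪R (A x), R (nseq k)⟫_ℂ := funext h5
      rw [hfe] at t1
      exact tendsto_nhds_unique t1 t2
    have hw0 : w = 0 := by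
      refine eq_zero_of_inner_eq_zero (S := LinearMap.range (G : N₁ →ₗ[ℂ] H)) hwM ?_
      rintro _ ⟨x, rfl⟩
      exact hGw x
    have hRr0 : ∀ m, ⟪R m, r⟫_ℂ = 0 := by
      intro m
      have t1 : Filter.Tendsto (fun k => ⟪G₂ m, wseq k⟫_ℂ) Filter.atTop
          (nhds ⟪G₂ m, w⟫_ℂ) := tendsto_const_nhds.inner hwlim
      have h5 : ∀ k, ⟪G₂ m, wseq k⟫_ℂ = ⟪R m, R (nseq k)⟫_ℂ := by
        intro k
        simp only [hwseqdef]
        rw [inner_add_right, F1', F3]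
        ring
      have hfe : (fun k => ⟪G₂ m, wseq k⟫_ℂ) = fun k => ⟪R m, R (nseq k)⟫_ℂ := funext h5
      rw [hfe] at t1
      have t2 : Filter.Tendsto (fun k => ⟪R m, R (nseq k)⟫_ℂ) Filter.atTop
          (nhds ⟪R m, r⟫_ℂ) := tendsto_const_nhds.inner hRlim
      have h6 := tendsto_nhds_unique t1 t2
      rw [hw0, inner_zero_right] at h6
      exact h6.symm
    have hr0 : r = 0 := by
      refine eq_zero_of_inner_eq_zero (S := LinearMap.range (R : N₂ →ₗ[ℂ] N₂)) hrKR ?_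
      rintro _ ⟨m, rfl⟩
      exact hRr0 m
    rw [← hRr, hr0, map_zero]
  have h23 : M = M₁ ⊔ M₂ → LinearMap.range (V₂ : N₂ →ₗ[ℂ] H) ≤ L := by
    intro h2
    have hM_le_L : M ≤ L := by
      refine Submodule.topologicalClosure_minimal _ ?_ (Submodule.isClosed_topologicalClosure _)
      rintro _ ⟨x, rfl⟩
      rw [ContinuousLinearMap.coe_coe, gpt']
      refine Submodule.le_topologicalClosure _ ?_
      exact Submodule.sub_mem _ (Submodule.mem_sup_left (LinearMap.mem_range_self _ x))
        (Submodule.mem_sup_right (LinearMap.mem_range_self _ _))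
    rintro _ ⟨n, rfl⟩
    have h4 : V₂ n = V₃ (B n) + G₂ n := by rw [g2pt]; abel
    rw [ContinuousLinearMap.coe_coe, h4]
    refine L.add_mem ?_ ?_
    · exact Submodule.le_topologicalClosure _
        (Submodule.mem_sup_right (LinearMap.mem_range_self _ _))
    · refine hM_le_L ?_
      rw [h2]
      exact Submodule.mem_sup_right (Submodule.le_topologicalClosure _
        (LinearMap.mem_range_self _ n))
  have h32 : LinearMap.range (V₂ : N₂ →ₗ[ℂ] H) ≤ L → M = M₁ ⊔ M₂ := by
    intro h3
    have hker : ∀ m, m ∈ L → adjoint V₃ m = 0 → m ∈ M := by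
      intro m hmL hm3
      obtain ⟨f, hf, hlim⟩ := exists_seq_of_mem_closure hmL
      set Φ : H →L[ℂ] H := 1 - V₃ ∘L adjoint V₃ with hΦdef
      have hΦf : ∀ k, Φ (f k) ∈ LinearMap.range (G : N₁ →ₗ[ℂ] H) := by
        intro k
        obtain ⟨u, hu, v, hv, huv⟩ := Submodule.mem_sup.mp (hf k)
        obtain ⟨x, rfl⟩ := hu
        obtain ⟨c, rfl⟩ := hv
        refine ⟨x, ?_⟩
        rw [← huv]
        simp only [hΦdef, hGdef, ContinuousLinearMap.comp_apply, ContinuousLinearMap.sub_apply,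
          ContinuousLinearMap.one_apply, map_add, ContinuousLinearMap.coe_coe]
        rw [hW₃x]
        abel
      have hΦlim : Filter.Tendsto (fun k => Φ (f k)) Filter.atTop (nhds (Φ m)) :=
        tendsto_clm Φ hlim
      have hΦm : Φ m = m := by
        simp only [hΦdef, ContinuousLinearMap.sub_apply, ContinuousLinearMap.comp_apply,
          ContinuousLinearMap.one_apply, hm3, map_zero, sub_zero]
      rw [hΦm] at hΦlim
      exact mem_closure_of_tendsto hΦlim (Filter.Eventually.of_forall hΦf)
    have hr₁ : ∀ a, G₁ a ∈ M := by
      intro a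
      refine hker _ ?_ ?_
      · rw [g1pt]
        refine L.sub_mem ?_ (h3 (LinearMap.mem_range_self _ _))
        exact Submodule.le_topologicalClosure _
          (Submodule.mem_sup_left (LinearMap.mem_range_self _ _))
      · rw [g1pt, map_sub, hfx]
        have h5 : adjoint V₃ (V₂ (A a)) = B (A a) := rfl
        rw [h5, sub_self]
    have hr₂ : ∀ n, G₂ n ∈ M := by
      intro n
      refine hker _ ?_ ?_
      · rw [g2pt]
        refine L.sub_mem (h3 (LinearMap.mem_range_self _ _)) ?_
        exact Submodule.le_topologicalClosure _
          (Submodule.mem_sup_right (LinearMap.mem_range_self _ _))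
      · rw [g2pt, map_sub, hW₃x]
        have h5 : adjoint V₃ (V₂ n) = B n := rfl
        rw [h5, sub_self]
    refine le_antisymm (hM_le_NN.trans hNN_le_sup) (sup_le ?_ ?_)
    · exact Submodule.topologicalClosure_minimal _ (by rintro _ ⟨a, rfl⟩; exact hr₁ a)
        (Submodule.isClosed_topologicalClosure _)
    · exact Submodule.topologicalClosure_minimal _ (by rintro _ ⟨n, rfl⟩; exact hr₂ n)
        (Submodule.isClosed_topologicalClosure _)
  exact ⟨⟨h12, h21⟩, ⟨h23, h32⟩⟩
end

section
/- Let A₂₁ and A₃₂ be contractions between Hilbert spaces such that the product A₃₂·A₂₁ is regular, i.e. Ran(I − A₃₂*A₃₂)^{1/2} ∩ Ran(I − A₂₁A₂₁*)^{1/2} = {0}. Then the orthogonal complement of the closed span of Ran A₃₂* and Ran A₂₁ is {0}. -/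
open ContinuousLinearMap

/-- If the product `A₃₂ ⋅ A₂₁` of contractions is regular, i.e. the ranges of
the positive square roots `R` of `1 − A₃₂*A₃₂` and `Q` of `1 − A₂₁A₂₁*` intersect trivially,
then `(Ran A₃₂* ⊔ Ran A₂₁)ᗮ = {0}`. -/
theorem regular_product_span_dense
    {N₁ N₂ N₃ : Type*}
    [NormedAddCommGroup N₁] [InnerProductSpace ℂ N₁] [CompleteSpace N₁]
    [NormedAddCommGroup N₂] [InnerProductSpace ℂ N₂] [CompleteSpace N₂]
    [NormedAddCommGroup N₃] [InnerProductSpace ℂ N₃] [CompleteSpace N₃]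
    (A₂₁ : N₁ →L[ℂ] N₂) (A₃₂ : N₂ →L[ℂ] N₃)
    (h₂₁ : ‖A₂₁‖ ≤ 1) (h₃₂ : ‖A₃₂‖ ≤ 1)
    (R Q : N₂ →L[ℂ] N₂) (hR : R.IsPositive) (hQ : Q.IsPositive)
    (hR2 : R ∘L R = 1 - adjoint A₃₂ ∘L A₃₂)
    (hQ2 : Q ∘L Q = 1 - A₂₁ ∘L adjoint A₂₁)
    (hreg : LinearMap.range (R : N₂ →ₗ[ℂ] N₂) ⊓ LinearMap.range (Q : N₂ →ₗ[ℂ] N₂) = ⊥) :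
    (LinearMap.range (adjoint A₃₂ : N₃ →ₗ[ℂ] N₂) ⊔ LinearMap.range (A₂₁ : N₁ →ₗ[ℂ] N₂))ᗮ = ⊥ := by
  rw [Submodule.eq_bot_iff]
  intro x hx
  rw [Submodule.mem_orthogonal] at hx
  have h1 : A₃₂ x = 0 := by
    apply ext_inner_left ℂ
    intro y
    rw [inner_zero_right, ← adjoint_inner_left]
    exact hx _ (Submodule.mem_sup_left (LinearMap.mem_range_self _ y))
  have h2 : adjoint A₂₁ x = 0 := by
    apply ext_inner_left ℂ
    intro y
    rw [inner_zero_right, adjoint_inner_right]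
    exact hx _ (Submodule.mem_sup_right (LinearMap.mem_range_self _ y))
  have hRx : R (R x) = x := by
    have := congrFun (congrArg (DFunLike.coe) hR2) x
    simpa [h1] using this
  have hQx : Q (Q x) = x := by
    have := congrFun (congrArg (DFunLike.coe) hQ2) x
    simpa [h2] using this
  have : x ∈ LinearMap.range (R : N₂ →ₗ[ℂ] N₂) ⊓ LinearMap.range (Q : N₂ →ₗ[ℂ] N₂) := ⟨⟨R x, hRx⟩, ⟨Q x, hQx⟩⟩
  rw [hreg] at this
  exact this
end

section
/- Let A₂₁, A₄₂, A₃₁, A₄₃ be contractions between Hilbert spaces such that the factorizations A₄₂·A₂₁ and A₄₃·A₃₁ are regular and each precedes the other, i.e. there exist contractions A₃₂, A₂₃ with A₄₂ = A₄₃A₃₂, A₃₁ = A₃₂A₂₁, A₄₃ = A₄₂A₂₃, A₃₂ = A₂₃A₃₁. Then there exists a unitary operator U with A₃₁ = U A₂₁ and A₄₃ = A₄₂ U⁻¹; in fact A₃₂ and A₂₃ are mutually inverse unitaries. -/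
open ContinuousLinearMap

section Aux

variable {H : Type*} [NormedAddCommGroup H] [InnerProductSpace ℂ H] [CompleteSpace H]

/-- Fixed points of a contraction are fixed points of its adjoint. -/
lemma aux_fix_adjoint (T : H →L[ℂ] H) (hT : ‖T‖ ≤ 1) {x : H} (hx : T x = x) :
    adjoint T x = x := by
  have hnorm : ‖adjoint T x‖ ≤ ‖x‖ := by
    calc ‖adjoint T x‖ ≤ ‖adjoint T‖ * ‖x‖ := (adjoint T).le_opNorm x
    _ ≤ 1 * ‖x‖ := by
        have : ‖adjoint T‖ = ‖T‖ := adjoint.norm_map T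
        nlinarith [norm_nonneg x]
    _ = ‖x‖ := one_mul _
  have hinner : inner ℂ (adjoint T x) x = (inner ℂ x x : ℂ) := by
    rw [adjoint_inner_left, hx]
  have hsq : ‖adjoint T x - x‖ ^ 2 ≤ 0 := by
    have := norm_sub_sq (𝕜 := ℂ) (adjoint T x) x
    rw [hinner] at this
    rw [this]
    have hre : RCLike.re (inner ℂ x x : ℂ) = ‖x‖ ^ 2 := by
      rw [inner_self_eq_norm_sq]
    rw [hre]
    nlinarith [norm_nonneg (adjoint T x), norm_nonneg x]
  have : ‖adjoint T x - x‖ = 0 := by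
    nlinarith [norm_nonneg (adjoint T x - x)]
  exact sub_eq_zero.mp (norm_eq_zero.mp this)

end Aux

section Key

variable {M N P : Type*}
  [NormedAddCommGroup M] [InnerProductSpace ℂ M] [CompleteSpace M]
  [NormedAddCommGroup N] [InnerProductSpace ℂ N] [CompleteSpace N]
  [NormedAddCommGroup P] [InnerProductSpace ℂ P] [CompleteSpace P]

lemma aux_key (T : N →L[ℂ] N) (hT : ‖T‖ ≤ 1)
    (A : N →L[ℂ] P) (B : M →L[ℂ] N) (R Q : N →L[ℂ] N)
    (hR2 : R ∘L R = 1 - adjoint A ∘L A) (hQ2 : Q ∘L Q = 1 - B ∘L adjoint B)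
    (hreg : LinearMap.range (R : N →ₗ[ℂ] N) ⊓ LinearMap.range (Q : N →ₗ[ℂ] N) = ⊥)
    (hAT : A ∘L T = A) (hTB : T ∘L B = B) (x : N) : T x = x := by
  set y := x - T x with hy
  have hAy : A y = 0 := by
    have h := congrArg (fun S : N →L[ℂ] P => S x) hAT
    simp only [comp_apply] at h
    simp [hy, map_sub, h]
  have hBy : adjoint B y = 0 := by
    refine ext_inner_right ℂ fun u => ?_
    rw [adjoint_inner_left]
    have hfix : T (B u) = B u := by
      have h := congrArg (fun S : M →L[ℂ] N => S u) hTB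
      simpa using h
    have hfix' : adjoint T (B u) = B u := aux_fix_adjoint T hT hfix
    have : (inner ℂ (T x) (B u) : ℂ) = inner ℂ x (B u) := by
      rw [← adjoint_inner_right, hfix']
    simp [hy, inner_sub_left, this]
  have hyR : y ∈ LinearMap.range (R : N →ₗ[ℂ] N) := by
    refine ⟨R y, ?_⟩
    change R (R y) = y
    have h := congrArg (fun S : N →L[ℂ] N => S y) hR2
    simp only [comp_apply, sub_apply, one_apply] at h
    rw [h, hAy, map_zero, sub_zero]
    rfl
  have hyQ : y ∈ LinearMap.range (Q : N →ₗ[ℂ] N) := by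
    refine ⟨Q y, ?_⟩
    change Q (Q y) = y
    have h := congrArg (fun S : N →L[ℂ] N => S y) hQ2
    simp only [comp_apply, sub_apply, one_apply] at h
    rw [h, hBy, map_zero, sub_zero]
    rfl
  have : y ∈ LinearMap.range (R : N →ₗ[ℂ] N) ⊓ LinearMap.range (Q : N →ₗ[ℂ] N) := ⟨hyR, hyQ⟩
  rw [hreg] at this
  have : y = 0 := this
  have := sub_eq_zero.mp this
  exact this.symm

end Key

set_option maxHeartbeats 2000000 in
/-- If the regular factorizations `A₄₂⋅A₂₁` and `A₄₃⋅A₃₁` of contractions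
precede each other (via contractions `A₃₂, A₂₃` with `A₄₂ = A₄₃A₃₂`, `A₃₁ = A₃₂A₂₁`,
`A₄₃ = A₄₂A₂₃`, `A₂₁ = A₂₃A₃₁`), then there is a unitary `U` with `A₃₁ = U A₂₁` and
`A₄₃ = A₄₂ U⁻¹`; in fact `A₃₂` and `A₂₃` are mutually inverse unitaries. -/
theorem regular_mutual_precedence_unitary
    {N₁ N₂ N₃ N₄ : Type*}
    [NormedAddCommGroup N₁] [InnerProductSpace ℂ N₁] [CompleteSpace N₁]
    [NormedAddCommGroup N₂] [InnerProductSpace ℂ N₂] [CompleteSpace N₂]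
    [NormedAddCommGroup N₃] [InnerProductSpace ℂ N₃] [CompleteSpace N₃]
    [NormedAddCommGroup N₄] [InnerProductSpace ℂ N₄] [CompleteSpace N₄]
    (A₂₁ : N₁ →L[ℂ] N₂) (A₃₁ : N₁ →L[ℂ] N₃) (A₄₂ : N₂ →L[ℂ] N₄) (A₄₃ : N₃ →L[ℂ] N₄)
    (A₃₂ : N₂ →L[ℂ] N₃) (A₂₃ : N₃ →L[ℂ] N₂)
    (h₂₁ : ‖A₂₁‖ ≤ 1) (h₃₁ : ‖A₃₁‖ ≤ 1) (h₄₂ : ‖A₄₂‖ ≤ 1) (h₄₃ : ‖A₄₃‖ ≤ 1)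
    (h₃₂ : ‖A₃₂‖ ≤ 1) (h₂₃ : ‖A₂₃‖ ≤ 1)
    -- mutual precedence
    (hf₁ : A₄₂ = A₄₃ ∘L A₃₂) (hf₂ : A₃₁ = A₃₂ ∘L A₂₁)
    (hf₃ : A₄₃ = A₄₂ ∘L A₂₃) (hf₄ : A₂₁ = A₂₃ ∘L A₃₁)
    -- regularity of `A₄₂ ⋅ A₂₁`
    (R₁ Q₁ : N₂ →L[ℂ] N₂) (hR₁ : R₁.IsPositive) (hQ₁ : Q₁.IsPositive)
    (hR₁2 : R₁ ∘L R₁ = 1 - adjoint A₄₂ ∘L A₄₂)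
    (hQ₁2 : Q₁ ∘L Q₁ = 1 - A₂₁ ∘L adjoint A₂₁)
    (hreg₁ : LinearMap.range (R₁ : N₂ →ₗ[ℂ] N₂) ⊓ LinearMap.range (Q₁ : N₂ →ₗ[ℂ] N₂) = ⊥)
    -- regularity of `A₄₃ ⋅ A₃₁`
    (R₂ Q₂ : N₃ →L[ℂ] N₃) (hR₂ : R₂.IsPositive) (hQ₂ : Q₂.IsPositive)
    (hR₂2 : R₂ ∘L R₂ = 1 - adjoint A₄₃ ∘L A₄₃)
    (hQ₂2 : Q₂ ∘L Q₂ = 1 - A₃₁ ∘L adjoint A₃₁)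
    (hreg₂ : LinearMap.range (R₂ : N₃ →ₗ[ℂ] N₃) ⊓ LinearMap.range (Q₂ : N₃ →ₗ[ℂ] N₃) = ⊥) :
    ∃ U : N₂ ≃ₗᵢ[ℂ] N₃,
      (∀ x, U x = A₃₂ x) ∧ (∀ y, U.symm y = A₂₃ y) ∧
      (∀ x, A₃₁ x = U (A₂₁ x)) ∧ (∀ y, A₄₃ y = A₄₂ (U.symm y)) := by
  -- `T₂ = A₂₃ ∘ A₃₂ = 1` on `N₂`
  have hT₂norm : ‖A₂₃ ∘L A₃₂‖ ≤ 1 := by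
    calc ‖A₂₃ ∘L A₃₂‖ ≤ ‖A₂₃‖ * ‖A₃₂‖ := opNorm_comp_le _ _
    _ ≤ 1 := by nlinarith [norm_nonneg A₂₃, norm_nonneg A₃₂]
  have hT₃norm : ‖A₃₂ ∘L A₂₃‖ ≤ 1 := by
    calc ‖A₃₂ ∘L A₂₃‖ ≤ ‖A₃₂‖ * ‖A₂₃‖ := opNorm_comp_le _ _
    _ ≤ 1 := by nlinarith [norm_nonneg A₂₃, norm_nonneg A₃₂]
  have hAT₂ : A₄₂ ∘L (A₂₃ ∘L A₃₂) = A₄₂ := by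
    rw [← comp_assoc, ← hf₃, ← hf₁]
  have hTB₂ : (A₂₃ ∘L A₃₂) ∘L A₂₁ = A₂₁ := by
    rw [comp_assoc, ← hf₂, ← hf₄]
  have hAT₃ : A₄₃ ∘L (A₃₂ ∘L A₂₃) = A₄₃ := by
    rw [← comp_assoc, ← hf₁, ← hf₃]
  have hTB₃ : (A₃₂ ∘L A₂₃) ∘L A₃₁ = A₃₁ := by
    rw [comp_assoc, ← hf₄, ← hf₂]
  have hT₂ : ∀ x : N₂, A₂₃ (A₃₂ x) = x := fun x => by
    have := aux_key (A₂₃ ∘L A₃₂) hT₂norm A₄₂ A₂₁ R₁ Q₁ hR₁2 hQ₁2 hreg₁ hAT₂ hTB₂ x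
    simpa using this
  have hT₃ : ∀ y : N₃, A₃₂ (A₂₃ y) = y := fun y => by
    have := aux_key (A₃₂ ∘L A₂₃) hT₃norm A₄₃ A₃₁ R₂ Q₂ hR₂2 hQ₂2 hreg₂ hAT₃ hTB₃ y
    simpa using this
  -- `A₃₂` is an isometry
  have hiso : ∀ x : N₂, ‖A₃₂ x‖ = ‖x‖ := by
    intro x
    have h1 : ‖A₃₂ x‖ ≤ ‖x‖ := by
      calc ‖A₃₂ x‖ ≤ ‖A₃₂‖ * ‖x‖ := A₃₂.le_opNorm x
      _ ≤ ‖x‖ := by nlinarith [norm_nonneg x]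
    have h2 : ‖x‖ ≤ ‖A₃₂ x‖ := by
      calc ‖x‖ = ‖A₂₃ (A₃₂ x)‖ := by rw [hT₂ x]
      _ ≤ ‖A₂₃‖ * ‖A₃₂ x‖ := A₂₃.le_opNorm _
      _ ≤ ‖A₃₂ x‖ := by nlinarith [norm_nonneg (A₃₂ x)]
    linarith
  let f : N₂ →ₗᵢ[ℂ] N₃ := ⟨(A₃₂ : N₂ →ₗ[ℂ] N₃), hiso⟩
  have hsurj : Function.Surjective f := fun y => ⟨A₂₃ y, hT₃ y⟩
  have hUapp : ∀ x, (LinearIsometryEquiv.ofSurjective f hsurj) x = A₃₂ x := by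
    intro x
    rw [LinearIsometryEquiv.coe_ofSurjective]
    rfl
  have hsymm : ∀ z : N₃, (LinearIsometryEquiv.ofSurjective f hsurj).symm z = A₂₃ z := by
    intro z
    apply (LinearIsometryEquiv.ofSurjective f hsurj).injective
    rw [LinearIsometryEquiv.apply_symm_apply, hUapp]
    exact (hT₃ z).symm
  refine ⟨LinearIsometryEquiv.ofSurjective f hsurj, hUapp, hsymm, ?_, ?_⟩
  · intro x
    rw [hUapp, hf₂]; rfl
  · intro y
    rw [hsymm y, hf₃]; rfl
end

section
/- Let A₂₁, A₃₂ be contractions as above with A₄₂·A₂₁ and A₄₃·A₃₁ regular, A₄₂ = A₄₃A₃₂, A₃₁ = A₃₂A₂₁, A₄₃ = A₄₂A₂₃, A₃₂ = A₂₃A₃₁, and set A = A₂₃A₃₂. Then A acts as the identity on Ran A₂₁ and A* acts as the identity on Ran A₄₂*, and hence A equals the identity on the closed span of Ran A₂₁ and Ran A₄₂*. -/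
open ContinuousLinearMap

/-- Under mutual precedence of the regular factorizations `A₄₂⋅A₂₁` and
`A₄₃⋅A₃₁` (via contractions `A₃₂, A₂₃`), the operator `A = A₂₃A₃₂` acts as the identity on
`Ran A₂₁`, `A*` acts as the identity on `Ran A₄₂*`, and hence `A` is the identity on the
closed span of `Ran A₂₁` and `Ran A₄₂*`. -/
theorem mutual_precedence_identity_on_span
    {N₁ N₂ N₃ N₄ : Type*}
    [NormedAddCommGroup N₁] [InnerProductSpace ℂ N₁] [CompleteSpace N₁]
    [NormedAddCommGroup N₂] [InnerProductSpace ℂ N₂] [CompleteSpace N₂]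
    [NormedAddCommGroup N₃] [InnerProductSpace ℂ N₃] [CompleteSpace N₃]
    [NormedAddCommGroup N₄] [InnerProductSpace ℂ N₄] [CompleteSpace N₄]
    (A₂₁ : N₁ →L[ℂ] N₂) (A₃₁ : N₁ →L[ℂ] N₃) (A₄₂ : N₂ →L[ℂ] N₄) (A₄₃ : N₃ →L[ℂ] N₄)
    (A₃₂ : N₂ →L[ℂ] N₃) (A₂₃ : N₃ →L[ℂ] N₂)
    (h₂₁ : ‖A₂₁‖ ≤ 1) (h₃₁ : ‖A₃₁‖ ≤ 1) (h₄₂ : ‖A₄₂‖ ≤ 1) (h₄₃ : ‖A₄₃‖ ≤ 1)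
    (h₃₂ : ‖A₃₂‖ ≤ 1) (h₂₃ : ‖A₂₃‖ ≤ 1)
    (hf₁ : A₄₂ = A₄₃ ∘L A₃₂) (hf₂ : A₃₁ = A₃₂ ∘L A₂₁)
    (hf₃ : A₄₃ = A₄₂ ∘L A₂₃) (hf₄ : A₂₁ = A₂₃ ∘L A₃₁)
    (R₁ Q₁ : N₂ →L[ℂ] N₂) (hR₁ : R₁.IsPositive) (hQ₁ : Q₁.IsPositive)
    (hR₁2 : R₁ ∘L R₁ = 1 - adjoint A₄₂ ∘L A₄₂)
    (hQ₁2 : Q₁ ∘L Q₁ = 1 - A₂₁ ∘L adjoint A₂₁)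
    (hreg₁ : LinearMap.range (R₁ : N₂ →ₗ[ℂ] N₂) ⊓ LinearMap.range (Q₁ : N₂ →ₗ[ℂ] N₂) = ⊥)
    (R₂ Q₂ : N₃ →L[ℂ] N₃) (hR₂ : R₂.IsPositive) (hQ₂ : Q₂.IsPositive)
    (hR₂2 : R₂ ∘L R₂ = 1 - adjoint A₄₃ ∘L A₄₃)
    (hQ₂2 : Q₂ ∘L Q₂ = 1 - A₃₁ ∘L adjoint A₃₁)
    (hreg₂ : LinearMap.range (R₂ : N₃ →ₗ[ℂ] N₃) ⊓ LinearMap.range (Q₂ : N₃ →ₗ[ℂ] N₃) = ⊥) :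
    (∀ x, (A₂₃ ∘L A₃₂) (A₂₁ x) = A₂₁ x) ∧
    (∀ y, adjoint (A₂₃ ∘L A₃₂) (adjoint A₄₂ y) = adjoint A₄₂ y) ∧
    (∀ v ∈ (LinearMap.range (A₂₁ : N₁ →ₗ[ℂ] N₂) ⊔ LinearMap.range (adjoint A₄₂ : N₄ →ₗ[ℂ] N₂)).topologicalClosure,
      (A₂₃ ∘L A₃₂) v = v) := by
  set T := A₂₃ ∘L A₃₂ with hT
  have key1 : ∀ x, T (A₂₁ x) = A₂₁ x := by
    intro x
    have h : T ∘L A₂₁ = A₂₁ := by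
      rw [hT, ContinuousLinearMap.comp_assoc, ← hf₂, ← hf₄]
    exact DFunLike.congr_fun h x
  have hcomp : A₄₂ ∘L T = A₄₂ := by
    rw [hT, ← ContinuousLinearMap.comp_assoc, ← hf₃, ← hf₁]
  have key2 : ∀ y, adjoint T (adjoint A₄₂ y) = adjoint A₄₂ y := by
    intro y
    have h : adjoint T ∘L adjoint A₄₂ = adjoint A₄₂ := by
      rw [← adjoint_comp A₄₂ T, hcomp]
    exact DFunLike.congr_fun h y
  have hTnorm : ‖T‖ ≤ 1 := by
    calc ‖T‖ ≤ ‖A₂₃‖ * ‖A₃₂‖ := opNorm_comp_le _ _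
    _ ≤ 1 := mul_le_one₀ h₂₃ (norm_nonneg _) h₃₂
  have fix_of_adj : ∀ v : N₂, adjoint T v = v → T v = v := by
    intro v hv
    have hinner : (inner ℂ (T v) v : ℂ) = inner ℂ v v := by
      rw [← adjoint_inner_right T v v, hv]
    have inner_eq : (RCLike.re (inner ℂ (T v) v : ℂ)) = ‖v‖ ^ 2 := by
      rw [hinner, inner_self_eq_norm_sq]
    have hnorm : ‖T v‖ ≤ ‖v‖ := by
      calc ‖T v‖ ≤ ‖T‖ * ‖v‖ := le_opNorm T v
      _ ≤ 1 * ‖v‖ := by gcongr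
      _ = ‖v‖ := one_mul _
    have hsq2 : ‖T v‖ ^ 2 ≤ ‖v‖ ^ 2 := pow_le_pow_left₀ (norm_nonneg _) hnorm 2
    have hsq : ‖T v - v‖ ^ 2 ≤ 0 := by
      rw [norm_sub_sq (𝕜 := ℂ) (T v) v, inner_eq]
      linarith
    have h0 : ‖T v - v‖ ^ 2 = 0 := le_antisymm hsq (sq_nonneg _)
    exact sub_eq_zero.mp (norm_eq_zero.mp (sq_eq_zero_iff.mp h0))
  refine ⟨key1, key2, ?_⟩
  intro v hv
  set K : Submodule ℂ N₂ := LinearMap.ker ((T - 1 : N₂ →L[ℂ] N₂) : N₂ →ₗ[ℂ] N₂) with hK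
  have hKclosed : IsClosed (K : Set N₂) := ContinuousLinearMap.isClosed_ker (T - 1)
  have hmem : ∀ w : N₂, w ∈ K ↔ T w = w := by
    intro w
    simp [hK, LinearMap.mem_ker, sub_eq_zero]
  have hle : LinearMap.range (A₂₁ : N₁ →ₗ[ℂ] N₂) ⊔ LinearMap.range (adjoint A₄₂ : N₄ →ₗ[ℂ] N₂) ≤ K := by
    refine sup_le ?_ ?_
    · rintro w ⟨x, rfl⟩
      exact (hmem _).mpr (key1 x)
    · rintro w ⟨y, rfl⟩
      exact (hmem _).mpr (fix_of_adj _ (key2 y))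
  exact (hmem v).mp (Submodule.topologicalClosure_minimal _ hle hKclosed hv)
end

section
/- Let π_i : L²(C, N_i) → H (i = 1,…,n) satisfy the n-model axiom (iii): π_i^†π_k = π_i^†π_j π_j^†π_k for all i ≥ j ≥ k, where π_j^† is the adjoint of π_j relative to the weight Ξ_j = π_j*π_j (so π_jπ_j^† is the orthogonal projection onto Ran π_j). Then for i ≥ j ≥ k ≥ l ≥ m, P_{π_i∨…∨π_j}(I − π_kπ_k^†)P_{π_l∨…∨π_m} = 0, where P_{π_i∨…∨π_j} is the orthogonal projection onto the closed span of Ran π_i, …, Ran π_j. -/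
open ContinuousLinearMap

/-- The orthogonal projection onto the closure of a submodule, as an operator `H →L[ℂ] H`. -/
noncomputable def orthProjCl {H : Type*} [NormedAddCommGroup H] [InnerProductSpace ℂ H]
    [CompleteSpace H] (S : Submodule ℂ H) : H →L[ℂ] H :=
  haveI : CompleteSpace S.topologicalClosure :=
    S.isClosed_topologicalClosure.completeSpace_coe
  S.topologicalClosure.subtypeL ∘L S.topologicalClosure.orthogonalProjectionOnto

/-- In an n-model (isometries `W i` with
`W_i*W_k = (W_i*W_j)(W_j*W_k)` for `i ≥ j ≥ k`), for `i ≥ j ≥ k ≥ l ≥ m` one has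
`P_{π_i∨…∨π_j} (I − π_kπ_k†) P_{π_l∨…∨π_m} = 0`. -/
theorem model_span_defect_vanishes
    {ι : Type*} [LinearOrder ι]
    {H : Type*} [NormedAddCommGroup H] [InnerProductSpace ℂ H] [CompleteSpace H]
    {E : ι → Type*} [∀ r, NormedAddCommGroup (E r)] [∀ r, InnerProductSpace ℂ (E r)]
    [∀ r, CompleteSpace (E r)]
    (W : ∀ r, E r →L[ℂ] H)
    (hiso : ∀ r, ∀ x, ‖W r x‖ = ‖x‖)
    (hmod : ∀ i j k, k ≤ j → j ≤ i →
      adjoint (W i) ∘L W k = (adjoint (W i) ∘L W j) ∘L (adjoint (W j) ∘L W k))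
    (i j k l m : ι) (hji : j ≤ i) (hkj : k ≤ j) (hlk : l ≤ k) (hml : m ≤ l) :
    orthProjCl (⨆ r ∈ Set.Icc j i, LinearMap.range (W r : E r →ₗ[ℂ] H)) ∘L
        (1 - W k ∘L adjoint (W k)) ∘L
        orthProjCl (⨆ r ∈ Set.Icc m l, LinearMap.range (W r : E r →ₗ[ℂ] H)) = 0 := by
  set A : H →L[ℂ] H := 1 - W k ∘L adjoint (W k) with hA
  set Shi : Submodule ℂ H := ⨆ r ∈ Set.Icc j i, LinearMap.range (W r : E r →ₗ[ℂ] H) with hShi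
  set Slo : Submodule ℂ H := ⨆ r ∈ Set.Icc m l, LinearMap.range (W r : E r →ₗ[ℂ] H) with hSlo
  -- key algebraic identity : (W r)† A (W s) = 0
  have key : ∀ r s : ι, j ≤ r → r ≤ i → m ≤ s → s ≤ l →
      ∀ b : E s, adjoint (W r) (A (W s b)) = 0 := by
    intro r s hjr hri hms hsl b
    have h := hmod r k s (hsl.trans hlk) (hkj.trans hjr)
    have hb := congrFun (congrArg DFunLike.coe h) b
    simp only [ContinuousLinearMap.comp_apply] at hb
    simp only [hA, ContinuousLinearMap.sub_apply, ContinuousLinearMap.one_apply, map_sub,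
      ContinuousLinearMap.comp_apply, hb, sub_self]
  -- inner version
  have key' : ∀ r s : ι, j ≤ r → r ≤ i → m ≤ s → s ≤ l →
      ∀ (a : E r) (b : E s), (inner ℂ (W r a) (A (W s b)) : ℂ) = 0 := by
    intro r s hjr hri hms hsl a b
    have : W r a = adjoint (adjoint (W r)) a := by rw [adjoint_adjoint]
    rw [this, ContinuousLinearMap.adjoint_inner_left, key r s hjr hri hms hsl b,
      inner_zero_right]
  -- Step A : for v in closure of Slo, ⟪W r a, A v⟫ = 0
  have stepA : ∀ r : ι, j ≤ r → r ≤ i → ∀ a : E r,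
      ∀ v ∈ Slo.topologicalClosure, (inner ℂ (W r a) (A v) : ℂ) = 0 := by
    intro r hjr hri a v hv
    have hker : Slo.topologicalClosure ≤
        LinearMap.ker (((innerSL ℂ (W r a)) ∘L A : H →L[ℂ] ℂ) : H →ₗ[ℂ] ℂ) := by
      apply Submodule.topologicalClosure_minimal
      · rw [hSlo]
        apply iSup₂_le
        intro s hs
        rintro _ ⟨b, rfl⟩
        simpa using key' r s hjr hri hs.1 hs.2 a b
      · exact (ContinuousLinearMap.isClosed_ker _)
    simpa using hker hv
  -- Step B : for u in closure of Shi, v in closure of Slo, ⟪u, A v⟫ = 0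
  have stepB : ∀ v ∈ Slo.topologicalClosure, ∀ u ∈ Shi.topologicalClosure,
      (inner ℂ u (A v) : ℂ) = 0 := by
    intro v hv u hu
    have hker : Shi.topologicalClosure ≤ LinearMap.ker ((innerSL ℂ (A v) : H →L[ℂ] ℂ) : H →ₗ[ℂ] ℂ) := by
      apply Submodule.topologicalClosure_minimal
      · rw [hShi]
        apply iSup₂_le
        intro r hr
        rintro _ ⟨a, rfl⟩
        have := stepA r hr.1 hr.2 a v hv
        simp only [LinearMap.mem_ker, ContinuousLinearMap.coe_coe, coe_innerSL_apply, innerSL_apply_apply]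
        rw [← inner_conj_symm, this, map_zero]
      · exact (ContinuousLinearMap.isClosed_ker _)
    have h0 : (inner ℂ (A v) u : ℂ) = 0 := by simpa using hker hu
    rw [← inner_conj_symm, h0, map_zero]
  -- conclude
  haveI : CompleteSpace Shi.topologicalClosure :=
    Shi.isClosed_topologicalClosure.completeSpace_coe
  haveI : CompleteSpace Slo.topologicalClosure :=
    Slo.isClosed_topologicalClosure.completeSpace_coe
  ext x
  simp only [ContinuousLinearMap.comp_apply, ContinuousLinearMap.zero_apply, orthProjCl]
  set v : H := (Slo.topologicalClosure.orthogonalProjectionOnto x : H) with hv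
  have hvmem : v ∈ Slo.topologicalClosure := (Slo.topologicalClosure.orthogonalProjectionOnto x).2
  have hAv : A v ∈ Shi.topologicalClosureᗮ := by
    intro u hu
    exact stepB v hvmem u hu
  have : Shi.topologicalClosure.orthogonalProjectionOnto (A v) = 0 :=
    Submodule.orthogonalProjectionOnto_apply_of_mem_orthogonal hAv
  simp only [Submodule.subtypeL_apply]
  rw [this]
  simp
end

section
/- In an n-model, with q_{i±} = π_iP_±π_i^† and P_{(ij)} := P_{π_i∨…∨π_j}(I − q_{j+})(I − q_{i−}) for i ≥ j, the operator P_{(ij)} is an idempotent (P_{(ij)}² = P_{(ij)}), and it commutes in the sense P_{(ij)} = (I − q_{j+})P_{π_i∨…∨π_j}(I − q_{i−}) = (I − q_{j+})(I − q_{i−})P_{π_i∨…∨π_j}. -/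
open ContinuousLinearMap

section aux

variable {H : Type*} [NormedAddCommGroup H] [InnerProductSpace ℂ H] [CompleteSpace H]

lemma orthProjCl_apply_mem (S : Submodule ℂ H) {x : H} (hx : x ∈ S) :
    orthProjCl S x = x := by
  haveI : CompleteSpace S.topologicalClosure :=
    S.isClosed_topologicalClosure.completeSpace_coe
  exact Submodule.starProjection_eq_self_iff.mpr (S.le_topologicalClosure hx)

lemma orthProjCl_comp_eq {E : Type*} [NormedAddCommGroup E] [InnerProductSpace ℂ E]
    (S : Submodule ℂ H) (f : E →L[ℂ] H) (h : LinearMap.range (f : E →ₗ[ℂ] H) ≤ S) :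
    orthProjCl S ∘L f = f := by
  ext x
  exact orthProjCl_apply_mem S (h ⟨x, rfl⟩)

lemma orthProjCl_adjoint (S : Submodule ℂ H) : adjoint (orthProjCl S) = orthProjCl S := by
  haveI : CompleteSpace S.topologicalClosure :=
    S.isClosed_topologicalClosure.completeSpace_coe
  have := isSelfAdjoint_starProjection S.topologicalClosure
  rw [IsSelfAdjoint, star_eq_adjoint] at this
  exact this

lemma orthProjCl_apply_mem' (S : Submodule ℂ H) {x : H} (hx : x ∈ S.topologicalClosure) :
    orthProjCl S x = x := by
  haveI : CompleteSpace S.topologicalClosure :=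
    S.isClosed_topologicalClosure.completeSpace_coe
  exact Submodule.starProjection_eq_self_iff.mpr hx

lemma orthProjCl_idem (S : Submodule ℂ H) : orthProjCl S ∘L orthProjCl S = orthProjCl S := by
  haveI : CompleteSpace S.topologicalClosure :=
    S.isClosed_topologicalClosure.completeSpace_coe
  ext x
  simp only [comp_apply]
  exact orthProjCl_apply_mem' S (S.topologicalClosure.orthogonalProjectionOnto x).2

/-- Pure algebra: if `P`, `a`, `b` are idempotents in a ring with `Pa = aP = a`,
`Pb = bP = b` and `ba = 0`, then `P(1-a)(1-b)` is idempotent and commutes appropriately. -/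
lemma ring_aux {R : Type*} [Ring R] (P a b : R)
    (hP2 : P * P = P) (hPa : P * a = a) (haP : a * P = a)
    (hPb : P * b = b) (hbP : b * P = b)
    (ha2 : a * a = a) (hb2 : b * b = b) (hba : b * a = 0) :
    P * ((1 - a) * (1 - b)) * (P * ((1 - a) * (1 - b))) = P * ((1 - a) * (1 - b))
      ∧ P * ((1 - a) * (1 - b)) = (1 - a) * (P * (1 - b))
      ∧ P * ((1 - a) * (1 - b)) = (1 - a) * ((1 - b) * P) := by
  have hP1a : P * (1 - a) = (1 - a) * P := by
    rw [mul_sub, sub_mul, one_mul, mul_one, hPa, haP]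
  have hP1b : P * (1 - b) = (1 - b) * P := by
    rw [mul_sub, sub_mul, one_mul, mul_one, hPb, hbP]
  have e1 : (1 - b) * (1 - a) = 1 - a - b := by
    rw [mul_sub, sub_mul, sub_mul, one_mul, one_mul, mul_one, hba]
    abel
  have e2 : (1 - a) * (1 - a - b) = (1 - a) * (1 - b) := by
    have l : (1 - a) * (1 - a - b) = 1 - a - b - a + a * a + a * b := by noncomm_ring
    have r : (1 - a) * (1 - b) = 1 - a - b + a * b := by noncomm_ring
    rw [l, r, ha2]; abel
  have e3 : (1 - b) * (1 - b) = 1 - b := by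
    have l : (1 - b) * (1 - b) = 1 - b - b + b * b := by noncomm_ring
    rw [l, hb2]; abel
  have hkey : (1 - a) * (1 - b) * ((1 - a) * (1 - b)) = (1 - a) * (1 - b) := by
    calc (1 - a) * (1 - b) * ((1 - a) * (1 - b))
        = (1 - a) * ((1 - b) * (1 - a)) * (1 - b) := by noncomm_ring
      _ = (1 - a) * (1 - a - b) * (1 - b) := by rw [e1]
      _ = (1 - a) * (1 - b) * (1 - b) := by rw [e2]
      _ = (1 - a) * ((1 - b) * (1 - b)) := by rw [mul_assoc]
      _ = (1 - a) * (1 - b) := by rw [e3]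
  have hcomm : P * ((1 - a) * (1 - b)) = (1 - a) * ((1 - b) * P) := by
    calc P * ((1 - a) * (1 - b)) = (P * (1 - a)) * (1 - b) := by rw [mul_assoc]
      _ = ((1 - a) * P) * (1 - b) := by rw [hP1a]
      _ = (1 - a) * (P * (1 - b)) := by rw [mul_assoc]
      _ = (1 - a) * ((1 - b) * P) := by rw [hP1b]
  refine ⟨?_, ?_, hcomm⟩
  · calc P * ((1 - a) * (1 - b)) * (P * ((1 - a) * (1 - b)))
        = P * ((1 - a) * ((1 - b) * P)) * ((1 - a) * (1 - b)) := by
          simp only [mul_assoc]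
      _ = P * (P * ((1 - a) * (1 - b))) * ((1 - a) * (1 - b)) := by rw [← hcomm]
      _ = (P * P) * ((1 - a) * (1 - b) * ((1 - a) * (1 - b))) := by
          simp only [mul_assoc]
      _ = P * ((1 - a) * (1 - b)) := by rw [hP2, hkey]
  · rw [hcomm, ← hP1b]

end aux

section

variable {ι : Type*} [LinearOrder ι]
  {H : Type*} [NormedAddCommGroup H] [InnerProductSpace ℂ H] [CompleteSpace H]
  {E : ι → Type*} [∀ r, NormedAddCommGroup (E r)] [∀ r, InnerProductSpace ℂ (E r)]
  [∀ r, CompleteSpace (E r)]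

/-- `q_r = W_r p_r W_r*` -/
noncomputable def qmap (W : ∀ r, E r →L[ℂ] H) (p : ∀ r, E r →L[ℂ] E r) (r : ι) : H →L[ℂ] H :=
  W r ∘L p r ∘L adjoint (W r)

/-- The model projection `P_{(ij)} = P_{π_i∨…∨π_j}(I − q_{j+})(I − q_{i−})`. -/
noncomputable def Pmodel (W : ∀ r, E r →L[ℂ] H) (pPlus pMinus : ∀ r, E r →L[ℂ] E r)
    (i j : ι) : H →L[ℂ] H :=
  orthProjCl (⨆ r ∈ Set.Icc j i, LinearMap.range (W r : E r →ₗ[ℂ] H)) ∘L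
    (1 - qmap W pPlus j) ∘L (1 - qmap W pMinus i)

end

/-- The operator `P_{(ij)} = P_{π_i∨…∨π_j}(I − q_{j+})(I − q_{i−})` of an
n-model is idempotent, and equals `(I − q_{j+})P_{π_i∨…∨π_j}(I − q_{i−})` and
`(I − q_{j+})(I − q_{i−})P_{π_i∨…∨π_j}`. -/
theorem model_Pij_idempotent
    {ι : Type*} [LinearOrder ι]
    {H : Type*} [NormedAddCommGroup H] [InnerProductSpace ℂ H] [CompleteSpace H]
    {E : ι → Type*} [∀ r, NormedAddCommGroup (E r)] [∀ r, InnerProductSpace ℂ (E r)]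
    [∀ r, CompleteSpace (E r)]
    (W : ∀ r, E r →L[ℂ] H) (pPlus pMinus : ∀ r, E r →L[ℂ] E r)
    (hiso : ∀ r, ∀ x, ‖W r x‖ = ‖x‖)
    (hsum : ∀ r, pPlus r + pMinus r = 1)
    (hidemP : ∀ r, pPlus r ∘L pPlus r = pPlus r)
    (hidemM : ∀ r, pMinus r ∘L pMinus r = pMinus r)
    (hana : ∀ i j, j ≤ i → pMinus i ∘L (adjoint (W i) ∘L W j) ∘L pPlus j = 0)
    (hmod : ∀ i j k, k ≤ j → j ≤ i →
      adjoint (W i) ∘L W k = (adjoint (W i) ∘L W j) ∘L (adjoint (W j) ∘L W k))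
    (i j : ι) (hji : j ≤ i) :
    Pmodel W pPlus pMinus i j ∘L Pmodel W pPlus pMinus i j = Pmodel W pPlus pMinus i j
      ∧ Pmodel W pPlus pMinus i j
          = (1 - qmap W pPlus j) ∘L
              orthProjCl (⨆ r ∈ Set.Icc j i, LinearMap.range (W r : E r →ₗ[ℂ] H)) ∘L
              (1 - qmap W pMinus i)
      ∧ Pmodel W pPlus pMinus i j
          = (1 - qmap W pPlus j) ∘L (1 - qmap W pMinus i) ∘L
              orthProjCl (⨆ r ∈ Set.Icc j i, LinearMap.range (W r : E r →ₗ[ℂ] H)) := by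
  have hWW : ∀ r, adjoint (W r) ∘L W r = 1 :=
    fun r => (norm_map_iff_adjoint_comp_self (W r)).mp (hiso r)
  set S := ⨆ r ∈ Set.Icc j i, LinearMap.range (W r : E r →ₗ[ℂ] H) with hS
  have hrange : ∀ r ∈ Set.Icc j i, LinearMap.range (W r : E r →ₗ[ℂ] H) ≤ S :=
    fun r hr => le_iSup₂_of_le r hr le_rfl
  have hPW : ∀ r ∈ Set.Icc j i, orthProjCl S ∘L W r = W r :=
    fun r hr => orthProjCl_comp_eq S (W r) (hrange r hr)
  have hWP : ∀ r ∈ Set.Icc j i, adjoint (W r) ∘L orthProjCl S = adjoint (W r) := by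
    intro r hr
    have h := congrArg adjoint (hPW r hr)
    rwa [adjoint_comp, orthProjCl_adjoint] at h
  have hji' : j ∈ Set.Icc j i := ⟨le_rfl, hji⟩
  have hii : i ∈ Set.Icc j i := ⟨hji, le_rfl⟩
  have hP2 : orthProjCl S * orthProjCl S = orthProjCl S := orthProjCl_idem S
  have hPa : orthProjCl S * qmap W pPlus j = qmap W pPlus j := by
    show orthProjCl S ∘L (W j ∘L pPlus j ∘L adjoint (W j)) = _
    rw [← comp_assoc, hPW j hji']; rfl
  have haP : qmap W pPlus j * orthProjCl S = qmap W pPlus j := by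
    show (W j ∘L pPlus j ∘L adjoint (W j)) ∘L orthProjCl S = _
    rw [comp_assoc, comp_assoc, hWP j hji']; rfl
  have hPb : orthProjCl S * qmap W pMinus i = qmap W pMinus i := by
    show orthProjCl S ∘L (W i ∘L pMinus i ∘L adjoint (W i)) = _
    rw [← comp_assoc, hPW i hii]; rfl
  have hbP : qmap W pMinus i * orthProjCl S = qmap W pMinus i := by
    show (W i ∘L pMinus i ∘L adjoint (W i)) ∘L orthProjCl S = _
    rw [comp_assoc, comp_assoc, hWP i hii]; rfl
  have ha2 : qmap W pPlus j * qmap W pPlus j = qmap W pPlus j := by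
    show (W j ∘L pPlus j ∘L adjoint (W j)) ∘L (W j ∘L pPlus j ∘L adjoint (W j))
        = W j ∘L pPlus j ∘L adjoint (W j)
    calc (W j ∘L pPlus j ∘L adjoint (W j)) ∘L (W j ∘L pPlus j ∘L adjoint (W j))
        = W j ∘L ((pPlus j ∘L ((adjoint (W j) ∘L W j) ∘L pPlus j)) ∘L adjoint (W j)) := by
          simp only [comp_assoc]
      _ = W j ∘L pPlus j ∘L adjoint (W j) := by
          rw [hWW j, one_def, id_comp, hidemP j]
  have hb2 : qmap W pMinus i * qmap W pMinus i = qmap W pMinus i := by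
    show (W i ∘L pMinus i ∘L adjoint (W i)) ∘L (W i ∘L pMinus i ∘L adjoint (W i))
        = W i ∘L pMinus i ∘L adjoint (W i)
    calc (W i ∘L pMinus i ∘L adjoint (W i)) ∘L (W i ∘L pMinus i ∘L adjoint (W i))
        = W i ∘L ((pMinus i ∘L ((adjoint (W i) ∘L W i) ∘L pMinus i)) ∘L adjoint (W i)) := by
          simp only [comp_assoc]
      _ = W i ∘L pMinus i ∘L adjoint (W i) := by
          rw [hWW i, one_def, id_comp, hidemM i]
  have hba : qmap W pMinus i * qmap W pPlus j = 0 := by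
    show (W i ∘L pMinus i ∘L adjoint (W i)) ∘L (W j ∘L pPlus j ∘L adjoint (W j)) = 0
    calc (W i ∘L pMinus i ∘L adjoint (W i)) ∘L (W j ∘L pPlus j ∘L adjoint (W j))
        = W i ∘L ((pMinus i ∘L (adjoint (W i) ∘L W j) ∘L pPlus j) ∘L adjoint (W j)) := by
          simp only [comp_assoc]
      _ = 0 := by rw [hana i j hji]; simp
  exact ring_aux (orthProjCl S) (qmap W pPlus j) (qmap W pMinus i)
    hP2 hPa haP hPb hbP ha2 hb2 hba
end
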